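/- arXiv:1009.5659 — 8 statements merged into one kernel-verified Lean document; each statement's English description precedes it below -/
import Mathlib

section
/- For every integer r ≥ 1, integers k₁,…,k_r with k_j ≥ 1 for all j and k_r ≥ 2, and every z ∈ ℂ with Re z > 0, the Hurwitz polyzeta functions satisfy the difference equation ζ(k₁,…,k_r|z+1) − ζ(k₁,…,k_r|z) = −z^{−k₁} · ζ(k₂,…,k_r|z+1), where for r = 1 the right-hand side is −z^{−k₁} (using the convention ζ( |z) = 1 for the empty tuple). -/
/-- The Hurwitz polyzeta function `ζ(s₁,…,s_r|z)`, the sum over strictly increasing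
tuples `0 ≤ n₁ < ⋯ < n_r` of non-negative integers of `∏ j, (z + n_j)^(-s_j)`.
For the empty list of exponents this is `1`. -/
noncomputable def hurwitzPolyzeta (s : List ℂ) (z : ℂ) : ℂ :=
  ∑' n : {f : Fin s.length → ℕ // StrictMono f},
    ∏ j : Fin s.length, (z + (n.1 j : ℂ)) ^ (-(s.get j))

/-!
Splitting off the smallest index `n₁ = n` gives the first-index recursion
`ζ(k₁,…,k_r|z) = Σₙ (z+n)^{-k₁} ζ(k₂,…,k_r|z+n+1)`, valid as soon as the series for `z`
converges absolutely. Its summands at `z` are those at `z + 1` shifted by one index, so the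
two series differ exactly by the term `n = 0`. Absolute convergence for `Re z > 0` follows by
induction on `r` from the same recursion, with the telescoping sum
`Σₙ 1/((c+n)(c+n+1)) = 1/c` bounding each step.
-/

abbrev IncTuple (m : ℕ) := {f : Fin m → ℕ // StrictMono f}

namespace IncTuple

def cons {m : ℕ} (n : ℕ) (g : IncTuple m) : IncTuple (m + 1) :=
  ⟨Fin.cons n fun j => n + 1 + g.1 j,
    Fin.strictMono_cons.2 ⟨fun _ => by omega, fun _ _ hij => Nat.add_lt_add_left (g.2 hij) _⟩⟩

def consEquiv (m : ℕ) : ℕ × IncTuple m ≃ IncTuple (m + 1) where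
  toFun p := cons p.1 p.2
  invFun f := (f.1 0, ⟨fun j => f.1 j.succ - (f.1 0 + 1), fun i j hij => by
    have h0 := f.2 (Fin.succ_pos i)
    have hij' := f.2 (Fin.succ_lt_succ_iff.2 hij)
    dsimp only
    omega⟩)
  left_inv p := by
    ext j
    · rfl
    · simp [cons]
  right_inv f := by
    ext j
    induction j using Fin.cases with
    | zero => rfl
    | succ j =>
      have := f.2 (Fin.succ_pos j)
      simp only [cons, Fin.cons_succ]
      omega

instance : Unique (IncTuple 0) where
  default := ⟨Fin.elim0, fun i => i.elim0⟩
  uniq _ := Subtype.ext (funext fun i => i.elim0)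

end IncTuple

noncomputable def hurwitzPolyzetaTerm (s : List ℂ) (z : ℂ) (f : IncTuple s.length) : ℂ :=
  ∏ j, (z + f.1 j) ^ (-s.get j)

lemma hasSum_norm_hurwitzPolyzetaTerm_nil (z : ℂ) :
    HasSum (fun g => ‖hurwitzPolyzetaTerm [] z g‖) 1 := by
  simp [hurwitzPolyzetaTerm]

lemma hurwitzPolyzetaTerm_cons (a : ℂ) (s : List ℂ) (z : ℂ) (n : ℕ) (g : IncTuple s.length) :
    hurwitzPolyzetaTerm (a :: s) z (IncTuple.cons n g)
      = (z + n) ^ (-a) * hurwitzPolyzetaTerm s (z + n + 1) g := by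
  refine (Fin.prod_univ_succ (n := s.length) _).trans ?_
  simp only [IncTuple.cons, Fin.cons_zero, Fin.cons_succ, List.get_eq_getElem, Fin.val_succ,
    List.getElem_cons_succ, Fin.val_zero, List.getElem_cons_zero, hurwitzPolyzetaTerm]
  push_cast
  ring_nf

theorem hasSum_hurwitzPolyzeta_cons {a : ℂ} {s : List ℂ} {z : ℂ}
    (h : Summable (hurwitzPolyzetaTerm (a :: s) z)) :
    HasSum (fun n : ℕ => (z + n) ^ (-a) * hurwitzPolyzeta s (z + n + 1))
      (hurwitzPolyzeta (a :: s) z) := by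
  have hE := (IncTuple.consEquiv s.length).hasSum_iff.2 h.hasSum
  have hfiber := ((IncTuple.consEquiv s.length).summable_iff.2 h).prod_factor
  refine hE.prod_fiberwise fun n => ?_
  have hn := (hfiber n).hasSum
  simp only [Function.comp_apply, IncTuple.consEquiv, Equiv.coe_fn_mk, hurwitzPolyzetaTerm_cons,
    tsum_mul_left] at hn ⊢
  exact hn

theorem hurwitzPolyzeta_cons_add_one_sub {a : ℂ} {s : List ℂ} {z : ℂ}
    (h : Summable (hurwitzPolyzetaTerm (a :: s) z))
    (h₁ : Summable (hurwitzPolyzetaTerm (a :: s) (z + 1))) :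
    hurwitzPolyzeta (a :: s) (z + 1) - hurwitzPolyzeta (a :: s) z
      = -(z ^ (-a)) * hurwitzPolyzeta s (z + 1) := by
  have htail := (hasSum_nat_add_iff' 1).2 (hasSum_hurwitzPolyzeta_cons h)
  have hshift : (fun n : ℕ => (z + (n + 1 : ℕ)) ^ (-a) * hurwitzPolyzeta s (z + (n + 1 : ℕ) + 1))
      = fun n : ℕ => (z + 1 + n) ^ (-a) * hurwitzPolyzeta s (z + 1 + n + 1) := by
    funext n
    push_cast
    ring_nf
  rw [hshift, Finset.sum_range_one] at htail
  rw [(hasSum_hurwitzPolyzeta_cons h₁).unique htail]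
  simp only [Nat.cast_zero, add_zero]
  ring

lemma hasSum_inv_mul_add_one {c : ℝ} (hc : 0 < c) :
    HasSum (fun n : ℕ => ((c + n) * (c + n + 1))⁻¹) c⁻¹ := by
  have hpartial : ∀ N : ℕ, ∑ n ∈ Finset.range N, ((c + n) * (c + n + 1))⁻¹ = c⁻¹ - (c + N)⁻¹ := by
    intro N
    induction N with
    | zero => simp
    | succ N ih =>
      rw [Finset.sum_range_succ, ih]
      push_cast
      field_simp
      ring
  rw [hasSum_iff_tendsto_nat_of_nonneg (fun n => by positivity)]
  simp only [hpartial]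
  simpa using (tendsto_inv_atTop_zero.comp (Filter.tendsto_atTop_add_const_left _ c
    tendsto_natCast_atTop_atTop)).const_sub c⁻¹

lemma norm_add_natCast_cpow_neg_natCast_le {z : ℂ} (hz : 0 < z.re) (n k : ℕ) :
    ‖(z + n) ^ (-(k : ℂ))‖ ≤ ((z.re + n) ^ k)⁻¹ := by
  rw [Complex.cpow_neg, Complex.cpow_natCast, norm_inv, norm_pow]
  have := Complex.re_le_norm (z + n)
  simp only [Complex.add_re, Complex.natCast_re] at this
  gcongr

lemma inv_pow_le_mul_inv {c x : ℝ} (hc : 0 < c) (hcx : c ≤ x) {k : ℕ} (hk : 1 ≤ k) :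
    (x ^ k)⁻¹ ≤ (1 + c⁻¹) ^ k * x⁻¹ := by
  obtain ⟨k, rfl⟩ := Nat.exists_eq_add_of_le' hk
  calc (x ^ (k + 1))⁻¹ = x⁻¹ ^ k * x⁻¹ := by rw [← inv_pow, pow_succ]
    _ ≤ (1 + c⁻¹) ^ k * x⁻¹ := by
      have := inv_pos.2 (hc.trans_le hcx)
      gcongr
      linarith [inv_anti₀ hc hcx, inv_pos.2 hc]
    _ ≤ (1 + c⁻¹) ^ (k + 1) * x⁻¹ := by
      have := inv_pos.2 (hc.trans_le hcx)
      gcongr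
      · linarith [inv_pos.2 hc]
      · omega

lemma inv_pow_le_mul_inv_mul_succ {c x : ℝ} (hc : 0 < c) (hcx : c ≤ x) {k : ℕ} (hk : 2 ≤ k) :
    (x ^ k)⁻¹ ≤ (1 + c⁻¹) ^ k * (x * (x + 1))⁻¹ := by
  have hx : 0 < x := hc.trans_le hcx
  obtain ⟨k, rfl⟩ := Nat.exists_eq_add_of_le' hk
  have h1 : x⁻¹ ≤ (1 + c⁻¹) * (x + 1)⁻¹ :=
    calc x⁻¹ = (1 + x⁻¹) * (x + 1)⁻¹ := by field_simp
      _ ≤ (1 + c⁻¹) * (x + 1)⁻¹ := by gcongr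
  calc (x ^ (k + 1 + 1))⁻¹ = (x ^ (k + 1))⁻¹ * x⁻¹ := by rw [pow_succ, mul_inv]
    _ ≤ (1 + c⁻¹) ^ (k + 1) * x⁻¹ * ((1 + c⁻¹) * (x + 1)⁻¹) := by
      gcongr
      exact inv_pow_le_mul_inv hc hcx (by omega)
    _ = (1 + c⁻¹) ^ (k + 1 + 1) * (x * (x + 1))⁻¹ := by rw [mul_inv]; ring

lemma summable_norm_hurwitzPolyzetaTerm_cons_and_tsum_le {a : ℂ} {s : List ℂ} {z : ℂ}
    (hz : 0 < z.re) {C : ℝ}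
    (hs : ∀ n : ℕ, Summable fun g => ‖hurwitzPolyzetaTerm s (z + n + 1) g‖)
    (hle : ∀ n : ℕ, ‖(z + n) ^ (-a)‖ * ∑' g, ‖hurwitzPolyzetaTerm s (z + n + 1) g‖
      ≤ C * ((z.re + n) * (z.re + n + 1))⁻¹) :
    Summable (fun f => ‖hurwitzPolyzetaTerm (a :: s) z f‖)
      ∧ ∑' f, ‖hurwitzPolyzetaTerm (a :: s) z f‖ ≤ C * z.re⁻¹ := by
  set F : ℕ × IncTuple s.length → ℝ :=
    fun p => ‖hurwitzPolyzetaTerm (a :: s) z (IncTuple.consEquiv _ p)‖ with hF_def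
  have hF : ∀ n g, F (n, g) = ‖(z + n) ^ (-a)‖ * ‖hurwitzPolyzetaTerm s (z + n + 1) g‖ := by
    intro n g
    simp only [hF_def, IncTuple.consEquiv, Equiv.coe_fn_mk, hurwitzPolyzetaTerm_cons, norm_mul]
  have htel := (hasSum_inv_mul_add_one hz).mul_left C
  have hfiber : ∀ n, Summable fun g => F (n, g) := fun n => by
    simpa only [hF] using (hs n).mul_left _
  have houter : Summable fun n => ∑' g, F (n, g) := by
    refine htel.summable.of_nonneg_of_le (fun n => tsum_nonneg fun _ => norm_nonneg _) fun n => ?_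
    simpa only [hF, tsum_mul_left] using hle n
  have hF_summable : Summable F :=
    (summable_prod_of_nonneg fun _ => norm_nonneg _).2 ⟨hfiber, houter⟩
  refine ⟨(IncTuple.consEquiv _).summable_iff.1 hF_summable, ?_⟩
  calc ∑' f, ‖hurwitzPolyzetaTerm (a :: s) z f‖ = ∑' p, F p := (Equiv.tsum_eq _ _).symm
    _ = ∑' n, ∑' g, F (n, g) := hF_summable.tsum_prod
    _ ≤ ∑' n : ℕ, C * ((z.re + n) * (z.re + n + 1))⁻¹ := by
      refine houter.tsum_le_tsum (fun n => ?_) htel.summable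
      simpa only [hF, tsum_mul_left] using hle n
    _ = C * z.re⁻¹ := htel.tsum_eq

theorem summable_norm_hurwitzPolyzetaTerm_singleton_and_tsum_le {k : ℕ} (hk : 2 ≤ k) {z : ℂ}
    (hz : 0 < z.re) :
    Summable (fun f => ‖hurwitzPolyzetaTerm [(k : ℂ)] z f‖)
      ∧ ∑' f, ‖hurwitzPolyzetaTerm [(k : ℂ)] z f‖ ≤ (1 + z.re⁻¹) ^ k * z.re⁻¹ := by
  refine summable_norm_hurwitzPolyzetaTerm_cons_and_tsum_le hz
    (fun _ => (hasSum_norm_hurwitzPolyzetaTerm_nil _).summable) fun n => ?_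
  rw [(hasSum_norm_hurwitzPolyzetaTerm_nil _).tsum_eq, mul_one]
  exact (norm_add_natCast_cpow_neg_natCast_le hz n k).trans
    (inv_pow_le_mul_inv_mul_succ hz (by simp) hk)

theorem summable_norm_hurwitzPolyzetaTerm_natCast_and_tsum_le (k : ℕ) (ks : List ℕ) (hk : 1 ≤ k)
    (hks : ∀ x ∈ ks, 1 ≤ x) (hlast : 2 ≤ (k :: ks).getLast (List.cons_ne_nil _ _))
    {z : ℂ} (hz : 0 < z.re) :
    Summable (fun f => ‖hurwitzPolyzetaTerm ((k :: ks).map ((↑) : ℕ → ℂ)) z f‖)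
      ∧ ∑' f, ‖hurwitzPolyzetaTerm ((k :: ks).map ((↑) : ℕ → ℂ)) z f‖
        ≤ (1 + z.re⁻¹) ^ (k :: ks).sum * z.re⁻¹ := by
  induction ks generalizing k z with
  | nil =>
    exact summable_norm_hurwitzPolyzetaTerm_singleton_and_tsum_le hlast hz
  | cons k' t ih =>
    obtain ⟨hk', ht⟩ := List.forall_mem_cons.1 hks
    rw [List.getLast_cons_cons] at hlast
    have htail := fun n : ℕ => ih k' hk' ht hlast (z := z + n + 1) (by simp; positivity)
    refine summable_norm_hurwitzPolyzetaTerm_cons_and_tsum_le hz (fun n => (htail n).1) fun n => ?_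
    have hbound := (htail n).2
    simp only [Complex.add_re, Complex.natCast_re, Complex.one_re] at hbound
    calc _ ≤ ((z.re + n) ^ k)⁻¹ * ((1 + (z.re + n + 1)⁻¹) ^ (k' :: t).sum * (z.re + n + 1)⁻¹) :=
          mul_le_mul (norm_add_natCast_cpow_neg_natCast_le hz n k) hbound
            (tsum_nonneg fun _ => norm_nonneg _) (by positivity)
      _ ≤ (1 + z.re⁻¹) ^ k * (z.re + n)⁻¹ * ((1 + z.re⁻¹) ^ (k' :: t).sum * (z.re + n + 1)⁻¹) := by
          gcongr
          · exact inv_pow_le_mul_inv hz (by simp) hk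
          · linarith [n.cast_nonneg (α := ℝ)]
      _ = (1 + z.re⁻¹) ^ (k :: k' :: t).sum * ((z.re + n) * (z.re + n + 1))⁻¹ := by
          rw [List.sum_cons (l := k' :: t), pow_add, mul_inv]
          ring

/-- The difference equation
`ζ(k₁,…,k_r|z+1) − ζ(k₁,…,k_r|z) = −z^{−k₁}·ζ(k₂,…,k_r|z+1)`. -/
theorem hurwitzPolyzeta_difference_eq
    (k₁ : ℕ) (ks : List ℕ)
    (hk₁ : 1 ≤ k₁) (hks : ∀ k ∈ ks, 1 ≤ k)
    (hlast : 2 ≤ (k₁ :: ks).getLast (List.cons_ne_nil _ _))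
    (z : ℂ) (hz : 0 < z.re) :
    hurwitzPolyzeta ((k₁ :: ks).map (fun k => (k : ℂ))) (z + 1)
      - hurwitzPolyzeta ((k₁ :: ks).map (fun k => (k : ℂ))) z
      = -(z ^ (-(k₁ : ℂ))) * hurwitzPolyzeta (ks.map (fun k => (k : ℂ))) (z + 1) := by
  -- With its binder unannotated, `l.map fun k => (k : ℂ)` elaborates as a coercion of `l`
  -- lifted through the list monad.
  have hmap : ∀ l : List ℕ, (l.map fun k => (k : ℂ)) = l.map ((↑) : ℕ → ℂ) := fun l => by
    simp [List.map_eq_flatMap]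
  have hsummable : ∀ w : ℂ, 0 < w.re →
      Summable (hurwitzPolyzetaTerm ((k₁ :: ks).map ((↑) : ℕ → ℂ)) w) := fun w hw =>
    (summable_norm_hurwitzPolyzetaTerm_natCast_and_tsum_le k₁ ks hk₁ hks hlast hw).1.of_norm
  rw [hmap, hmap]
  exact hurwitzPolyzeta_cons_add_one_sub (hsummable z hz) (hsummable (z + 1) (by simp; positivity))
end

section
/- For every real z > 0, the limit as ε → 0⁺ of ( Σ_{n=0}^∞ (z+n)^{−(1+ε)} − 1/ε ) equals −Γ′(z)/Γ(z); that is, lim_{s→1} ( ζ_Hurwitz(s, z) − 1/(s−1) ) = −Γ′(z)/Γ(z), where ζ_Hurwitz(s, z) = Σ_{n=0}^∞ (z+n)^{−s}. -/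
/-!
Write `ψ = (log ∘ Γ)'` and split `∑ (z + n)^(-s) - 1/(s - 1)` into
`∑ ((z + n)^(-s) - (1 + n)^(-s))` plus `ζ(s) - 1/(s - 1)`. The second part tends to `γ` as
`s → 1⁺`. By the mean value theorem the terms of the first series are dominated on `[1, 2]` by a
summable sequence, so it is continuous there and tends to its value `∑ (1/(z + n) - 1/(1 + n))`
at `s = 1`. That series sums to
`-(ψ z + γ)`: its partial sums telescope through `ψ (x + 1) = ψ x + 1/x` and
`ψ (n + 1) = -γ + H_n`, and the remainder `ψ (z + N) - ψ (N + 1)` tends to `0` because `ψ` is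
monotone, `Γ` being log-convex.
-/

open Filter Topology Set

namespace Real

local notation "ψ" => deriv (log ∘ Gamma)

lemma differentiableAt_Gamma_of_pos {x : ℝ} (hx : 0 < x) : DifferentiableAt ℝ Gamma x :=
  differentiableAt_Gamma fun m => ((neg_nonpos.2 m.cast_nonneg).trans_lt hx).ne'

lemma differentiableAt_log_Gamma {x : ℝ} (hx : 0 < x) : DifferentiableAt ℝ (log ∘ Gamma) x :=
  (differentiableAt_Gamma_of_pos hx).log (Gamma_pos_of_pos hx).ne'

lemma deriv_Gamma_div_Gamma {x : ℝ} (hx : 0 < x) : deriv Gamma x / Gamma x = ψ x := by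
  rw [Function.comp_def, deriv.log (differentiableAt_Gamma_of_pos hx) (Gamma_pos_of_pos hx).ne']

lemma digamma_add_one {x : ℝ} (hx : 0 < x) : ψ (x + 1) = ψ x + x⁻¹ := by
  rw [← deriv_comp_add_const, ← deriv_log,
    ← deriv_add (differentiableAt_log_Gamma hx) (differentiableAt_log hx.ne')]
  apply EventuallyEq.deriv_eq
  filter_upwards [eventually_gt_nhds hx] with y hy
  simp only [Function.comp_apply, Pi.add_apply, Gamma_add_one hy.ne',
    log_mul hy.ne' (Gamma_pos_of_pos hy).ne', add_comm]

lemma digamma_add_nat {x : ℝ} (hx : 0 < x) (N : ℕ) :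
    ψ (x + N) = ψ x + ∑ n ∈ Finset.range N, (x + n)⁻¹ := by
  induction N with
  | zero => simp
  | succ N ih =>
    rw [Nat.cast_succ, ← add_assoc, digamma_add_one (by positivity), ih, Finset.sum_range_succ,
      add_assoc]

lemma digamma_nat_add_one (n : ℕ) : ψ (n + 1) = -eulerMascheroniConstant + harmonic n := by
  rw [← deriv_Gamma_div_Gamma (by positivity), deriv_Gamma_nat, Gamma_nat_eq_factorial,
    mul_div_cancel_left₀ _ (by positivity)]

lemma monotoneOn_digamma : MonotoneOn ψ (Ioi 0) :=
  convexOn_log_Gamma.monotoneOn_deriv fun _ hx => differentiableAt_log_Gamma hx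

lemma tendsto_digamma_nat_add_sub_digamma_nat {x : ℝ} (hx : 0 ≤ x) :
    Tendsto (fun N : ℕ => ψ (N + x) - ψ N) atTop (𝓝 0) := by
  set k := ⌈x⌉₊
  refine tendsto_of_tendsto_of_tendsto_of_le_of_le' tendsto_const_nhds
    (tendsto_const_div_atTop_nhds_zero_nat (k : ℝ)) ?_ ?_
  all_goals filter_upwards [eventually_gt_atTop 0] with N hN
  all_goals have hN' : (0 : ℝ) < N := by exact_mod_cast hN
  · exact sub_nonneg.2 <| monotoneOn_digamma hN' (mem_Ioi.2 (by positivity)) (by linarith)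
  · calc ψ (N + x) - ψ N ≤ ψ (N + k) - ψ N := by
          gcongr
          exact monotoneOn_digamma (mem_Ioi.2 (by positivity)) (mem_Ioi.2 (by positivity))
            (by linarith [Nat.le_ceil x])
      _ = ∑ n ∈ Finset.range k, ((N : ℝ) + n)⁻¹ := by
          rw [digamma_add_nat hN', add_sub_cancel_left]
      _ ≤ ∑ _n ∈ Finset.range k, (N : ℝ)⁻¹ := by gcongr; simp
      _ = k / N := by rw [Finset.sum_const, Finset.card_range, nsmul_eq_mul, div_eq_mul_inv]

lemma tendsto_sum_range_inv_sub_inv {x : ℝ} (hx : 0 < x) :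
    Tendsto (fun N : ℕ => ∑ n ∈ Finset.range N, ((1 + n : ℝ)⁻¹ - (x + n)⁻¹)) atTop
      (𝓝 (ψ x + eulerMascheroniConstant)) := by
  have hsum (N : ℕ) : ∑ n ∈ Finset.range N, ((1 + n : ℝ)⁻¹ - (x + n)⁻¹) =
      ψ x + eulerMascheroniConstant - ((ψ (N + x) - ψ N) - (ψ (N + 1) - ψ N)) := by
    rw [Finset.sum_sub_distrib, add_comm (N : ℝ), digamma_add_nat hx N, digamma_nat_add_one,
      harmonic]
    push_cast
    simp only [add_comm (1 : ℝ)]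
    ring
  simpa [hsum] using tendsto_const_nhds.sub ((tendsto_digamma_nat_add_sub_digamma_nat hx.le).sub
    (tendsto_digamma_nat_add_sub_digamma_nat zero_le_one))

lemma rpow_le_rpow_add_rpow {x a b s : ℝ} (hx : 0 < x) (has : a ≤ s) (hsb : s ≤ b) :
    x ^ s ≤ x ^ a + x ^ b := by
  rcases le_or_gt 1 x with h1 | h1
  · exact (rpow_le_rpow_of_exponent_le h1 hsb).trans (le_add_of_nonneg_left (rpow_nonneg hx.le a))
  · exact (rpow_le_rpow_of_exponent_ge hx h1.le has).trans
      (le_add_of_nonneg_right (rpow_nonneg hx.le b))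

lemma abs_rpow_neg_sub_rpow_neg_le {a b c s : ℝ} (hc : 0 < c) (ha : c ≤ a) (hb : c ≤ b)
    (hs : 0 ≤ s) : |a ^ (-s) - b ^ (-s)| ≤ s * c ^ (-s - 1) * |a - b| := by
  have hderiv (t : ℝ) (ht : t ∈ Ici c) :
      HasDerivWithinAt (fun t : ℝ => t ^ (-s)) (-s * t ^ (-s - 1)) (Ici c) t :=
    (hasDerivAt_rpow_const (Or.inl (hc.trans_le ht).ne')).hasDerivWithinAt
  have hbound (t : ℝ) (ht : t ∈ Ici c) : ‖-s * t ^ (-s - 1)‖ ≤ s * c ^ (-s - 1) := by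
    rw [norm_mul, norm_neg, norm_of_nonneg hs, norm_of_nonneg (rpow_nonneg (hc.le.trans ht) _)]
    exact mul_le_mul_of_nonneg_left (rpow_le_rpow_of_nonpos hc ht (by linarith)) hs
  simpa only [Real.norm_eq_abs] using
    (convex_Ici c).norm_image_sub_le_of_norm_hasDerivWithin_le hderiv hbound hb ha

lemma summable_add_nat_rpow_neg {a s : ℝ} (ha : 0 < a) (hs : 1 < s) :
    Summable fun n : ℕ => (a + n) ^ (-s) := by
  refine ((summable_one_div_nat_add_rpow a s).2 hs).congr fun n => ?_
  rw [abs_of_pos (by positivity), rpow_neg (by positivity), one_div, add_comm]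

lemma exists_summable_norm_add_nat_rpow_neg_sub_le {z : ℝ} (hz : 0 < z) :
    ∃ u : ℕ → ℝ, Summable u ∧
      ∀ s ∈ Icc (1 : ℝ) 2, ∀ n : ℕ, ‖(z + n) ^ (-s) - (1 + n) ^ (-s)‖ ≤ u n := by
  set m := min z 1
  have hm : 0 < m := lt_min hz one_pos
  refine ⟨fun n => 2 * |z - 1| * ((m + n) ^ (-3 : ℝ) + (m + n) ^ (-2 : ℝ)),
    ((summable_add_nat_rpow_neg hm (by norm_num)).add
      (summable_add_nat_rpow_neg hm one_lt_two)).mul_left _, fun s hs n => ?_⟩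
  have hmn : 0 < m + n := by positivity
  calc ‖(z + n) ^ (-s) - (1 + n) ^ (-s)‖
      ≤ s * (m + n) ^ (-s - 1) * |(z + n) - (1 + n)| :=
        abs_rpow_neg_sub_rpow_neg_le hmn (by gcongr; exact min_le_left _ _)
          (by gcongr; exact min_le_right _ _) (by linarith [hs.1])
    _ ≤ 2 * ((m + n) ^ (-3 : ℝ) + (m + n) ^ (-2 : ℝ)) * |z - 1| := by
        rw [add_sub_add_right_eq_sub]
        gcongr
        · exact hs.2
        · exact rpow_le_rpow_add_rpow hmn (by linarith [hs.2]) (by linarith [hs.1])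
    _ = 2 * |z - 1| * ((m + n) ^ (-3 : ℝ) + (m + n) ^ (-2 : ℝ)) := by ring

lemma continuousOn_tsum_add_nat_rpow_neg_sub {z : ℝ} (hz : 0 < z) :
    ContinuousOn (fun s : ℝ => ∑' n : ℕ, ((z + n) ^ (-s) - (1 + n) ^ (-s))) (Icc 1 2) := by
  obtain ⟨u, hu, hbound⟩ := exists_summable_norm_add_nat_rpow_neg_sub_le hz
  refine continuousOn_tsum (fun n => Continuous.continuousOn ?_) hu fun n s hs => hbound s hs n
  exact (continuous_const.rpow continuous_neg fun _ => Or.inl (by positivity)).sub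
    (continuous_const.rpow continuous_neg fun _ => Or.inl (by positivity))

lemma hasSum_add_nat_rpow_neg_one_sub {z : ℝ} (hz : 0 < z) :
    HasSum (fun n : ℕ => (z + n) ^ (-1 : ℝ) - (1 + n) ^ (-1 : ℝ))
      (-(ψ z + eulerMascheroniConstant)) := by
  obtain ⟨u, hu, hbound⟩ := exists_summable_norm_add_nat_rpow_neg_sub_le hz
  rw [(hu.of_norm_bounded (hbound 1 ⟨le_rfl, one_le_two⟩)).hasSum_iff_tendsto_nat]
  convert (tendsto_sum_range_inv_sub_inv hz).neg using 2 with N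
  simp only [rpow_neg_one, ← Finset.sum_neg_distrib, neg_sub]

lemma tendsto_tsum_one_add_nat_rpow_neg_sub_inv :
    Tendsto (fun s : ℝ => ∑' n : ℕ, (1 + n : ℝ) ^ (-s) - 1 / (s - 1)) (𝓝[>] 1)
      (𝓝 eulerMascheroniConstant) := by
  have h := (Complex.continuous_re.tendsto _).comp
    ZetaAsymptotics.tendsto_riemannZeta_sub_one_div_nhds_right
  rw [Complex.ofReal_re] at h
  refine h.congr' ?_
  filter_upwards [self_mem_nhdsWithin] with s (hs : 1 < s)
  have hzeta : riemannZeta s = ((∑' n : ℕ, (1 + n : ℝ) ^ (-s) : ℝ) : ℂ) := by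
    rw [zeta_eq_tsum_one_div_nat_add_one_cpow (by simpa using hs), Complex.ofReal_tsum]
    congr 1 with n
    rw [rpow_neg (by positivity), Complex.ofReal_inv, Complex.ofReal_cpow (by positivity), one_div]
    push_cast
    ring_nf
  rw [Function.comp_apply, hzeta, ← Complex.ofReal_one, ← Complex.ofReal_sub,
    ← Complex.ofReal_div, ← Complex.ofReal_sub, Complex.ofReal_re]

theorem tendsto_tsum_add_nat_rpow_neg_sub_inv {z : ℝ} (hz : 0 < z) :
    Tendsto (fun s : ℝ => ∑' n : ℕ, (z + n) ^ (-s) - 1 / (s - 1)) (𝓝[>] 1)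
      (𝓝 (-ψ z)) := by
  have hdiff : Tendsto (fun s : ℝ => ∑' n : ℕ, ((z + n) ^ (-s) - (1 + n) ^ (-s))) (𝓝[>] 1)
      (𝓝 (-(ψ z + eulerMascheroniConstant))) := by
    rw [← (hasSum_add_nat_rpow_neg_one_sub hz).tsum_eq]
    exact ((continuousOn_tsum_add_nat_rpow_neg_sub hz).continuousWithinAt
      (left_mem_Icc.2 one_le_two)).mono_of_mem_nhdsWithin (Icc_mem_nhdsGT one_lt_two)
  rw [show -ψ z = -(ψ z + eulerMascheroniConstant) + eulerMascheroniConstant by ring]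
  refine (hdiff.add tendsto_tsum_one_add_nat_rpow_neg_sub_inv).congr' ?_
  filter_upwards [self_mem_nhdsWithin] with s (hs : 1 < s)
  rw [(summable_add_nat_rpow_neg hz hs).tsum_sub (summable_add_nat_rpow_neg one_pos hs)]
  ring

end Real

/-- For real `z > 0`, `lim_{ε→0⁺} ( Σ_{n=0}^∞ (z+n)^{−(1+ε)} − 1/ε ) = −Γ′(z)/Γ(z)`. -/
theorem hurwitzZeta_sub_pole_tendsto_neg_digamma (z : ℝ) (hz : 0 < z) :
    Tendsto (fun ε : ℝ => (∑' n : ℕ, (z + (n : ℝ)) ^ (-(1 + ε))) - 1 / ε)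
      (𝓝[>] 0) (𝓝 (-(deriv Real.Gamma z / Real.Gamma z))) := by
  have hshift : Tendsto (fun ε : ℝ => 1 + ε) (𝓝[>] 0) (𝓝[>] 1) :=
    tendsto_nhdsWithin_of_tendsto_nhds_of_eventually_within _
      (by simpa using ((continuous_const_add (1 : ℝ)).tendsto 0).mono_left nhdsWithin_le_nhds)
      (eventually_nhdsWithin_of_forall fun ε (hε : 0 < ε) => by simpa using hε)
  rw [Real.deriv_Gamma_div_Gamma hz]
  simpa only [Function.comp_def, add_sub_cancel_left] using
    (Real.tendsto_tsum_add_nat_rpow_neg_sub_inv hz).comp hshift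
end

section
/- For every integer r ≥ 1 and all non-negative integers k₁,…,k_r, the normalized multiple Bernoulli polynomials satisfy, as an identity in ℚ[z], the difference equation ζ(−k₁,…,−k_r|z+1) − ζ(−k₁,…,−k_r|z) = −z^{k₁} · ζ(−k₂,…,−k_r|z+1), where for r = 1 the right-hand side is −z^{k₁} (convention: ζ of the empty tuple is the constant polynomial 1). -/
open Polynomial

/-- Auxiliary: normalized multiple Bernoulli polynomial of the reversed tuple,
defined by the recursion of the paper (acting on the last two entries, which are
at the front of the reversed list). -/
noncomputable def nmbpRev : List ℕ → ℚ[X]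
  | [] => 1
  | [k] => -(C ((k + 1 : ℚ)⁻¹)) * Polynomial.bernoulli (k + 1)
  | kr :: km :: rest =>
      -(C ((kr + 1 : ℚ)⁻¹)) * nmbpRev ((km + kr + 1) :: rest)
        - C (1 / 2 : ℚ) * nmbpRev ((km + kr) :: rest)
        + ∑ q ∈ Finset.Icc 1 kr,
            C ((ascPochhammer ℚ q).eval (-(kr : ℚ))
                * _root_.bernoulli (q + 1) / ((q + 1).factorial : ℚ)) *
              nmbpRev ((km + kr - q) :: rest)
  termination_by l => l.length
  decreasing_by all_goals simp

/-- The normalized multiple Bernoulli polynomial `ζ(−k₁,…,−k_r|z) ∈ ℚ[z]`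
(the empty tuple gives the constant polynomial `1`). -/
noncomputable def nmbp (l : List ℕ) : ℚ[X] := nmbpRev l.reverse

/-!
With `B'ᵢ = bernoulli' i` (so `B'₁ = +1/2`), `B_{k+1}(z+1) = ∑ᵢ binom(k+1,i) B'ᵢ z^{k+1-i}`, and
`(-k)_q B_{q+1}/(q+1)! = -binom(k+1,q+1) B'_{q+1}/(k+1)`. Hence all three kinds of terms of the
recursion are one sum: `ζ(…,-k_{r-1},-k_r|z) = ∑ᵢ bᵢ ζ(…,-k_{r-1}-k_r-1+i|z)`, where the `bᵢ` are
the coefficients of `ζ(-k_r|z+1) = ∑ᵢ bᵢ z^{k_r+1-i}`. The difference operator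
`Δf = f(z+1) - f(z)` is linear and the recursion only touches the last entries, so by induction
everything reduces to `Δ ζ(-k|z) = -z^k`; for `r = 2` the resulting `∑ᵢ bᵢ (-z^{k₁+k₂+1-i})` folds
back into `-z^{k₁} ζ(-k₂|z+1)`.
-/

open Finset

theorem Polynomial.bernoulli_comp_X_add_one (n : ℕ) :
    (bernoulli n).comp (X + 1)
      = ∑ i ∈ range (n + 1), monomial (n - i) (bernoulli' i * n.choose i) := by
  rw [add_comm, bernoulli_comp_one_add_X, bernoulli, add_comm, ← eq_sub_iff_add_eq,
    ← sum_sub_distrib]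
  rcases n.eq_zero_or_pos with rfl | hn
  · simp
  rw [sum_eq_single_of_mem 1 (by simp; omega)]
  · simp only [← C_mul_X_pow_eq_monomial, bernoulli'_one, _root_.bernoulli_one,
      Nat.choose_one_right, nsmul_eq_mul, ← sub_mul, ← C_sub]
    norm_num
  · intro i _ hi
    rw [← map_sub, ← sub_mul, bernoulli_eq_bernoulli'_of_ne_one hi, sub_self, zero_mul, map_zero]

theorem ascPochhammer_eval_neg_mul_bernoulli_div_factorial (k q : ℕ) :
    (ascPochhammer ℚ q).eval (-(k : ℚ)) * _root_.bernoulli (q + 1) / ((q + 1).factorial : ℚ)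
      = -((k + 1 : ℚ)⁻¹ * (bernoulli' (q + 1) * (k + 1).choose (q + 1))) := by
  have hdesc : ((k : ℚ) + 1) * k.descFactorial q = (q + 1).factorial * (k + 1).choose (q + 1) := by
    exact_mod_cast (Nat.succ_descFactorial_succ k q).symm.trans
      (Nat.descFactorial_eq_factorial_mul_choose _ _)
  rw [ascPochhammer_eval_neg_eq_descPochhammer, descPochhammer_eval_eq_descFactorial,
    bernoulli'_eq_bernoulli]
  field_simp
  linear_combination ((-1 : ℚ) ^ q * _root_.bernoulli (q + 1)) * hdesc

noncomputable def nmbpShiftCoeff (k i : ℕ) : ℚ :=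
  -((k + 1 : ℚ)⁻¹ * (bernoulli' i * (k + 1).choose i))

theorem nmbpRev_singleton_comp_X_add_one (k : ℕ) :
    (nmbpRev [k]).comp (X + 1) = ∑ i ∈ range (k + 2), C (nmbpShiftCoeff k i) * X ^ (k + 1 - i) := by
  rw [nmbpRev, mul_comp, neg_comp, C_comp, bernoulli_comp_X_add_one, mul_sum]
  refine sum_congr rfl fun i _ => ?_
  rw [← C_mul_X_pow_eq_monomial, nmbpShiftCoeff]
  simp only [map_neg, map_mul]
  ring

theorem nmbpRev_cons_cons (k m : ℕ) (rest : List ℕ) :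
    nmbpRev (k :: m :: rest)
      = ∑ i ∈ range (k + 2), C (nmbpShiftCoeff k i) * nmbpRev ((m + k + 1 - i) :: rest) := by
  rw [nmbpRev, sum_range_succ', sum_range_succ', ← Ico_add_one_right_eq_Icc,
    sum_Ico_eq_sum_range, Nat.add_sub_cancel]
  have hsum : ∀ i ∈ range k,
      C ((ascPochhammer ℚ (1 + i)).eval (-(k : ℚ)) * _root_.bernoulli (1 + i + 1)
          / ((1 + i + 1).factorial : ℚ)) * nmbpRev ((m + k - (1 + i)) :: rest)
        = C (nmbpShiftCoeff k (i + 1 + 1)) * nmbpRev ((m + k + 1 - (i + 1 + 1)) :: rest) := by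
    intro i hi
    rw [ascPochhammer_eval_neg_mul_bernoulli_div_factorial, nmbpShiftCoeff,
      show m + k + 1 - (i + 1 + 1) = m + k - (1 + i) by omega, add_comm 1 i]
  rw [sum_congr rfl hsum]
  have h0 : nmbpShiftCoeff k 0 = -(k + 1 : ℚ)⁻¹ := by simp [nmbpShiftCoeff]
  have h1 : nmbpShiftCoeff k (0 + 1) = -(1 / 2) := by
    rw [nmbpShiftCoeff, bernoulli'_one, Nat.choose_one_right]
    push_cast
    field_simp
  rw [h0, h1, Nat.sub_zero, Nat.add_sub_cancel, map_neg, map_neg]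
  ring

theorem nmbpRev_singleton_comp_X_add_one_sub (k : ℕ) :
    (nmbpRev [k]).comp (X + 1) - nmbpRev [k] = -X ^ k := by
  have hunit : C ((k + 1 : ℚ)⁻¹) * ((k + 1 : ℕ) : ℚ[X]) = 1 := by
    rw [← C_eq_natCast, ← C_mul, ← C_1]
    push_cast
    field_simp
  rw [nmbpRev, mul_comp, neg_comp, C_comp, add_comm X 1, bernoulli_comp_one_add_X,
    Nat.add_sub_cancel, nsmul_eq_mul]
  linear_combination (-X ^ k) * hunit

theorem Polynomial.sum_C_mul_comp_sub {R ι : Type*} [CommRing R] (s : Finset ι) (b : ι → R)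
    (f : ι → R[X]) (q : R[X]) :
    (∑ i ∈ s, C (b i) * f i).comp q - ∑ i ∈ s, C (b i) * f i
      = ∑ i ∈ s, C (b i) * ((f i).comp q - f i) := by
  simp only [sum_comp, mul_comp, C_comp, mul_sub, sum_sub_distrib]

theorem nmbpRev_append_singleton_comp_X_add_one_sub : ∀ (M : List ℕ) (k₁ : ℕ),
    (nmbpRev (M ++ [k₁])).comp (X + 1) - nmbpRev (M ++ [k₁])
      = -X ^ k₁ * (nmbpRev M).comp (X + 1)
  | [], k₁ => by simpa [nmbpRev] using nmbpRev_singleton_comp_X_add_one_sub k₁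
  | [n], k₁ => by
    rw [List.singleton_append, nmbpRev_cons_cons, sum_C_mul_comp_sub,
      nmbpRev_singleton_comp_X_add_one, mul_sum]
    refine sum_congr rfl fun i hi => ?_
    rw [nmbpRev_singleton_comp_X_add_one_sub, Nat.add_assoc,
      Nat.add_sub_assoc (Nat.lt_succ_iff.mp (mem_range.mp hi)), pow_add]
    ring
  | kr :: km :: rest, k₁ => by
    rw [List.cons_append, List.cons_append, nmbpRev_cons_cons, nmbpRev_cons_cons,
      sum_C_mul_comp_sub, Polynomial.sum_comp, mul_sum]
    refine sum_congr rfl fun i _ => ?_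
    rw [← List.cons_append, nmbpRev_append_singleton_comp_X_add_one_sub, mul_comp, C_comp]
    ring
  termination_by M => M.length

/-- The difference equation for the normalized multiple Bernoulli polynomials:
`ζ(−k₁,…,−k_r|z+1) − ζ(−k₁,…,−k_r|z) = −z^{k₁}·ζ(−k₂,…,−k_r|z+1)` in `ℚ[z]`. -/
theorem nmbp_difference_eq (k₁ : ℕ) (ks : List ℕ) :
    (nmbp (k₁ :: ks)).comp (X + 1) - nmbp (k₁ :: ks)
      = -(X ^ k₁) * (nmbp ks).comp (X + 1) := by
  simpa only [nmbp, List.reverse_cons] using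
    nmbpRev_append_singleton_comp_X_add_one_sub ks.reverse k₁
end

section
/- For every integer n ≥ 1, the depth-two normalized multiple Bernoulli polynomials satisfy ζ(−n, −n−1|1) = ζ(−n−1, −n|1), i.e. the two polynomials obtained by swapping the entries −n and −n−1 take the same value at z = 1. -/
open Polynomial

lemma aux_even (k : ℕ) (hk : 2 ≤ k) (he : Even k) : (nmbpRev [k]).eval 1 = 0 := by
  conv_lhs => rw [nmbpRev]
  have h : bernoulli' (k + 1) = 0 :=
    bernoulli'_eq_zero_of_odd (he.add_one) (by omega)
  simp [Polynomial.bernoulli_eval_one, h]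

lemma aux_bern (q : ℕ) (hq2 : 2 ≤ q) (hq : Even q) : _root_.bernoulli (q + 1) = 0 := by
  rw [bernoulli_eq_bernoulli'_of_ne_one (by omega)]
  exact bernoulli'_eq_zero_of_odd (hq.add_one) (by omega)

lemma nmbpRev_pair (kr km : ℕ) : nmbpRev [kr, km] =
    -(C ((kr + 1 : ℚ)⁻¹)) * nmbpRev [km + kr + 1]
      - C (1 / 2 : ℚ) * nmbpRev [km + kr]
      + ∑ q ∈ Finset.Icc 1 kr,
          C ((ascPochhammer ℚ q).eval (-(kr : ℚ))
              * _root_.bernoulli (q + 1) / ((q + 1).factorial : ℚ)) *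
            nmbpRev [km + kr - q] := by
  conv_lhs => rw [nmbpRev]

/-- For `n ≥ 1`: `ζ(−n,−n−1|1) = ζ(−n−1,−n|1)`. -/
theorem nmbp_eval_one_swap (n : ℕ) (hn : 1 ≤ n) :
    (nmbp [n, n + 1]).eval 1 = (nmbp [n + 1, n]).eval 1 := by
  rw [nmbp, nmbp]
  simp only [List.reverse_cons, List.reverse_nil, List.nil_append, List.cons_append]
  rw [nmbpRev_pair, nmbpRev_pair]
  simp only [eval_add, eval_sub, eval_mul, eval_C, eval_neg, eval_finset_sum]
  have hsum1 : ∀ q ∈ Finset.Icc 1 (n+1),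
      ((ascPochhammer ℚ q).eval (-((n+1 : ℕ) : ℚ)) * _root_.bernoulli (q + 1) /
        ((q + 1).factorial : ℚ)) * (nmbpRev [n + (n+1) - q]).eval 1 = 0 := by
    intro q hq
    simp only [Finset.mem_Icc] at hq
    by_cases h : Even q
    · rw [aux_bern q (by rw [Nat.even_iff] at h; omega) h]; ring
    · have hq2 : q % 2 = 1 := Nat.odd_iff.mp (Nat.not_even_iff_odd.mp h)
      have : Even (n + (n+1) - q) := by rw [Nat.even_iff]; omega
      rw [aux_even _ (by omega) this, mul_zero]
  have hsum2 : ∀ q ∈ Finset.Icc 1 n,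
      ((ascPochhammer ℚ q).eval (-((n : ℕ) : ℚ)) * _root_.bernoulli (q + 1) /
        ((q + 1).factorial : ℚ)) * (nmbpRev [(n+1) + n - q]).eval 1 = 0 := by
    intro q hq
    simp only [Finset.mem_Icc] at hq
    by_cases h : Even q
    · rw [aux_bern q (by rw [Nat.even_iff] at h; omega) h]; ring
    · have hq2 : q % 2 = 1 := Nat.odd_iff.mp (Nat.not_even_iff_odd.mp h)
      have : Even ((n+1) + n - q) := by rw [Nat.even_iff]; omega
      rw [aux_even _ (by omega) this, mul_zero]
  rw [Finset.sum_eq_zero hsum1, Finset.sum_eq_zero hsum2]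
  have e1 : Even (n + (n+1) + 1) := ⟨n + 1, by ring⟩
  have e2 : Even ((n+1) + n + 1) := ⟨n + 1, by ring⟩
  rw [aux_even _ (by omega) e1, aux_even _ (by omega) e2]
  have : n + (n+1) = (n+1) + n := by omega
  rw [this]
  ring
end

section
/- For all integers n₁ ≥ 0 and n₂ ≥ 0, the normalized multiple Bernoulli polynomials satisfy ζ(−2n₁−1, 0, −2n₂−1|1) = −ζ(−2n₁−1, −2n₂−1|1). -/
open Polynomial

lemma aux_f_zero {k : ℕ} (hk : k % 2 = 0) (h0 : k ≠ 0) : (nmbpRev [k]).eval 1 = 0 := by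
  rw [nmbpRev]
  have : bernoulli' (k + 1) = 0 :=
    bernoulli'_eq_zero_of_odd (Nat.odd_iff.mpr (by omega)) (by omega)
  simp [Polynomial.bernoulli_eval_one, this]

lemma aux_bq_zero {q : ℕ} (hq : q % 2 = 0) (h0 : q ≠ 0) : _root_.bernoulli (q + 1) = 0 := by
  rw [bernoulli_eq_bernoulli'_of_ne_one (by omega)]
  exact bernoulli'_eq_zero_of_odd (Nat.odd_iff.mpr (by omega)) (by omega)

lemma aux_g_eq (a m : ℕ) : (nmbpRev [m, a]).eval 1 =
    -((m : ℚ) + 1)⁻¹ * (nmbpRev [a + m + 1]).eval 1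
      - (1 / 2 : ℚ) * (nmbpRev [a + m]).eval 1
      + ∑ q ∈ Finset.Icc 1 m,
          ((ascPochhammer ℚ q).eval (-(m : ℚ))
              * _root_.bernoulli (q + 1) / ((q + 1).factorial : ℚ)) *
            (nmbpRev [a + m - q]).eval 1 := by
  conv_lhs => rw [nmbpRev]
  simp [Polynomial.eval_finset_sum]

lemma aux_g_even {a m : ℕ} (ha : a % 2 = 1) (hm : m % 2 = 0) :
    (nmbpRev [m, a]).eval 1 = -(1 / 2 : ℚ) * (nmbpRev [a + m]).eval 1 := by
  rw [aux_g_eq]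
  rw [aux_f_zero (by omega) (by omega)]
  rw [Finset.sum_eq_zero]
  · ring
  · intro q hq
    simp only [Finset.mem_Icc] at hq
    rcases Nat.even_or_odd q with h | h
    · rw [aux_bq_zero (Nat.even_iff.mp h) (by omega)]
      ring
    · rw [aux_f_zero (by have := Nat.odd_iff.mp h; omega) (by omega)]
      ring

/-- `ζ(−2n₁−1, 0, −2n₂−1|1) = −ζ(−2n₁−1, −2n₂−1|1)` for all `n₁, n₂ ≥ 0`. -/
theorem nmbp_eval_one_insert_zero (n₁ n₂ : ℕ) :
    (nmbp [2 * n₁ + 1, 0, 2 * n₂ + 1]).eval 1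
      = -(nmbp [2 * n₁ + 1, 2 * n₂ + 1]).eval 1 := by
  set a := 2 * n₁ + 1 with ha
  set b := 2 * n₂ + 1 with hb
  have hrev : nmbp [a, 0, b] = nmbpRev [b, 0, a] := by simp [nmbp]
  have hrev2 : nmbp [a, b] = nmbpRev [b, a] := by simp [nmbp]
  rw [hrev, hrev2]
  -- expand the triple
  have h3 : (nmbpRev [b, 0, a]).eval 1 =
      -((b : ℚ) + 1)⁻¹ * (nmbpRev [b + 1, a]).eval 1
        - (1 / 2 : ℚ) * (nmbpRev [b, a]).eval 1
        + ∑ q ∈ Finset.Icc 1 b,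
            ((ascPochhammer ℚ q).eval (-(b : ℚ))
                * _root_.bernoulli (q + 1) / ((q + 1).factorial : ℚ)) *
              (nmbpRev [b - q, a]).eval 1 := by
    conv_lhs => rw [nmbpRev]
    simp [Polynomial.eval_finset_sum]
  rw [h3]
  have h1 : (nmbpRev [b + 1, a]).eval 1 = -(1 / 2 : ℚ) * (nmbpRev [a + b + 1]).eval 1 := by
    rw [aux_g_even (by omega) (by omega), show a + (b + 1) = a + b + 1 from rfl]
  have hsum : ∑ q ∈ Finset.Icc 1 b,
      ((ascPochhammer ℚ q).eval (-(b : ℚ))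
          * _root_.bernoulli (q + 1) / ((q + 1).factorial : ℚ)) *
        (nmbpRev [b - q, a]).eval 1
      = -(1 / 2 : ℚ) * ∑ q ∈ Finset.Icc 1 b,
          ((ascPochhammer ℚ q).eval (-(b : ℚ))
              * _root_.bernoulli (q + 1) / ((q + 1).factorial : ℚ)) *
            (nmbpRev [a + b - q]).eval 1 := by
    rw [Finset.mul_sum]
    refine Finset.sum_congr rfl fun q hq => ?_
    simp only [Finset.mem_Icc] at hq
    rcases Nat.even_or_odd q with h | h
    · rw [aux_bq_zero (Nat.even_iff.mp h) (by omega)]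
      ring
    · have hqodd := Nat.odd_iff.mp h
      rw [aux_g_even (a := a) (m := b - q) (by omega) (by omega)]
      have : a + (b - q) = a + b - q := by omega
      rw [this]
      ring
  rw [h1, hsum, aux_g_eq]
  rw [aux_f_zero (k := a + b) (by omega) (by omega)]
  ring
end

section
/- For every integer r ≥ 1, the depth-(r+1) normalized multiple Bernoulli polynomial with all entries zero satisfies ζ_{r+1}(0|−1) = (−1)^{r+1}·2/((r+2)(r+1)r), where ζ_{r+1}(0|z) := ζ(0,0,…,0|z) with r+1 zero entries. -/
open Polynomial

/-!
Let `U = tailSum` be the ℚ-linear operator on `ℚ[X]` with `U (X^k) = -X^k - B_{k+1}(X)/(k+1)`, a regularised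
`p ↦ (x ↦ ∑_{n > x} p n)`. Expanding `B_{k+1}` shows that the recursion, applied with a zero in the
second-to-last slot, acts on the last entry as `U` acts on `X^k`; together with
`ζ(-k|z) = (U + 1) (X^k)` this gives `ζ_{r+1}(0|z) = U^{r+1} 1 + U^r 1`.

A polynomial is determined by its forward difference and its mean over `[0, 1]`, and
`U p (x) - U p (x + 1) = p (x + 1)`, `∫₀¹ U p = -∫₀¹ p`. Comparing with the rising factorial
`z (z + 1) ⋯ (z + n)` yields `U^n 1 = (-1)^n / (n+1)! · d/dz [z (z + 1) ⋯ (z + n)]`, whose value at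
`-1` is `(-1)^(n+1) / (n (n + 1))`; the two terms add up to the claim.
-/

open scoped Nat

-- For even `q` both sides vanish since `B_{q+1} = 0`; for odd `q`, `(-k)_q = -k! / (k - q)!`.
lemma ascPochhammer_eval_neg_mul_bernoulli_succ_div_factorial {k q : ℕ} (hq : 1 ≤ q) :
    (ascPochhammer ℚ q).eval (-(k : ℚ)) * _root_.bernoulli (q + 1) / ((q + 1)! : ℚ)
      = -((k : ℚ) + 1)⁻¹ * (_root_.bernoulli (q + 1) * ((k + 1).choose (q + 1) : ℚ)) := by
  rcases Nat.even_or_odd q with hq_even | hq_odd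
  · rw [bernoulli_eq_zero_of_odd hq_even.add_one (by omega)]
    ring
  · have hchoose : ((k : ℚ) + 1) * (k.descFactorial q : ℚ) = (q + 1)! * ((k + 1).choose (q + 1) : ℚ) := by
      exact_mod_cast (Nat.succ_descFactorial_succ k q).symm.trans
        (Nat.descFactorial_eq_factorial_mul_choose _ _)
    rw [ascPochhammer_eval_neg_eq_descPochhammer, descPochhammer_eval_eq_descFactorial,
      hq_odd.neg_one_pow]
    field_simp
    linear_combination (-_root_.bernoulli (q + 1)) * hchoose

lemma derivative_ascPochhammer_succ_comp_X_add_one {S : Type*} [CommSemiring S] (n : ℕ) :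
    (derivative (ascPochhammer S (n + 1))).comp (X + 1) =
      derivative (ascPochhammer S (n + 1)) + (n + 1) • (derivative (ascPochhammer S n)).comp (X + 1) := by
  simpa [derivative_comp] using congrArg derivative (ascPochhammer_succ_comp_X_add_one (S := S) n)

lemma derivative_ascPochhammer_eval_neg_one {R : Type*} [CommRing R] (n : ℕ) :
    (derivative (ascPochhammer R (n + 2))).eval (-1) = -n ! := by
  induction n with
  | zero => simp [ascPochhammer_succ_right, derivative_mul]
  | succ n ih =>
    have hroot : (ascPochhammer R (n + 2)).eval (-1) = 0 := by
      exact_mod_cast ascPochhammer_eval_neg_coe_nat_of_lt (R := R) (k := 1) (by omega)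
    rw [ascPochhammer_succ_right, derivative_mul, eval_add, eval_mul, eval_mul, ih, hroot,
      Nat.factorial_succ, zero_mul, add_zero, eval_add, eval_X, eval_natCast]
    push_cast
    ring

namespace Polynomial

lemma eq_C_eval_zero_of_comp_X_add_one_eq {R : Type*} [CommRing R] [IsDomain R] [CharZero R]
    {p : R[X]} (h : p.comp (X + 1) = p) : p = C (p.eval 0) := by
  have hnat : ∀ n : ℕ, p.eval (n : R) = p.eval 0 := by
    intro n
    induction n with
    | zero => simp
    | succ n ih => rw [Nat.cast_succ, ← ih]; simpa using congrArg (eval (n : R)) h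
  exact eq_of_infinite_eval_eq _ _
    (Set.infinite_of_injective_forall_mem Nat.cast_injective fun n => by simp [hnat])

noncomputable def antidiff : ℚ[X] →ₗ[ℚ] ℚ[X] :=
  lsum fun k => LinearMap.toSpanSingleton ℚ ℚ[X] (((k : ℚ) + 1)⁻¹ • bernoulli (k + 1))

noncomputable def unitIntegral : ℚ[X] →ₗ[ℚ] ℚ :=
  lsum fun k => LinearMap.toSpanSingleton ℚ ℚ ((k : ℚ) + 1)⁻¹

lemma antidiff_monomial (k : ℕ) (a : ℚ) :
    antidiff (monomial k a) = (a / ((k : ℚ) + 1)) • bernoulli (k + 1) := by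
  simp [antidiff, div_eq_mul_inv, mul_smul]

lemma antidiff_X_pow (k : ℕ) : antidiff (X ^ k) = ((k : ℚ) + 1)⁻¹ • bernoulli (k + 1) := by
  rw [X_pow_eq_monomial, antidiff_monomial, one_div]

lemma unitIntegral_monomial (k : ℕ) (a : ℚ) :
    unitIntegral (monomial k a) = a / ((k : ℚ) + 1) := by
  simp [unitIntegral, div_eq_mul_inv]

lemma unitIntegral_C (a : ℚ) : unitIntegral (C a) = a := by
  simpa using unitIntegral_monomial 0 a

lemma unitIntegral_derivative (p : ℚ[X]) :
    unitIntegral (derivative p) = p.eval 1 - p.eval 0 := by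
  induction p using Polynomial.induction_on' with
  | add p q hp hq => simp only [map_add, hp, hq, eval_add]; ring
  | monomial n a =>
    cases n with
    | zero => simp
    | succ n =>
      rw [derivative_monomial, unitIntegral_monomial, eval_monomial, eval_monomial, one_pow,
        zero_pow n.succ_ne_zero]
      push_cast
      field_simp
      ring

lemma unitIntegral_bernoulli_succ (k : ℕ) : unitIntegral (bernoulli (k + 1)) = 0 := by
  have h := unitIntegral_derivative (bernoulli (k + 2))
  rw [derivative_bernoulli_add_one, bernoulli_eval_one, bernoulli_eval_zero,
    bernoulli_eq_bernoulli'_of_ne_one (by omega), sub_self,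
    show ((↑(k + 1) : ℚ[X]) + 1) = C ((k : ℚ) + 2) by simp [map_ofNat]; ring, ← smul_eq_C_mul, map_smul,
    smul_eq_zero] at h
  exact h.resolve_left (by positivity)

lemma unitIntegral_antidiff (p : ℚ[X]) : unitIntegral (antidiff p) = 0 := by
  induction p using Polynomial.induction_on' with
  | add p q hp hq => simp [hp, hq]
  | monomial n a => simp [antidiff_monomial, unitIntegral_bernoulli_succ]

lemma antidiff_comp_X_add_one (p : ℚ[X]) :
    (antidiff p).comp (X + 1) = antidiff p + p := by
  induction p using Polynomial.induction_on' with
  | add p q hp hq => simp only [map_add, add_comp, hp, hq]; ring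
  | monomial n a =>
    rw [antidiff_monomial, smul_comp, add_comm X, bernoulli_comp_one_add_X, smul_add,
      add_tsub_cancel_right, nsmul_eq_mul, ← C_mul_X_pow_eq_monomial, ← smul_mul_assoc,
      ← C_eq_natCast, smul_C, smul_eq_mul]
    congr 3
    push_cast
    field_simp

lemma inv_succ_smul_bernoulli_succ (k : ℕ) :
    ((k : ℚ) + 1)⁻¹ • bernoulli (k + 1)
      = C ((k + 1 : ℚ)⁻¹) * X ^ (k + 1) - C (1 / 2 : ℚ) * X ^ k
        - ∑ q ∈ Finset.Icc 1 k,
            C ((ascPochhammer ℚ q).eval (-(k : ℚ))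
                * _root_.bernoulli (q + 1) / ((q + 1)! : ℚ)) * X ^ (k - q) := by
  rw [← Finset.Ico_add_one_right_eq_Icc, Finset.sum_Ico_eq_sum_range, add_tsub_cancel_right,
    Polynomial.bernoulli, Finset.sum_range_succ', Finset.sum_range_succ', smul_add, smul_add,
    Finset.smul_sum]
  have hterm : ∀ j ∈ Finset.range k,
      ((k : ℚ) + 1)⁻¹ • monomial (k + 1 - (j + 1 + 1))
          (_root_.bernoulli (j + 1 + 1) * ((k + 1).choose (j + 1 + 1) : ℚ))
        = -(C ((ascPochhammer ℚ (1 + j)).eval (-(k : ℚ))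
            * _root_.bernoulli (1 + j + 1) / ((1 + j + 1)! : ℚ)) * X ^ (k - (1 + j))) := by
    intro j _
    rw [add_comm 1 j, ascPochhammer_eval_neg_mul_bernoulli_succ_div_factorial (by omega),
      C_mul_X_pow_eq_monomial, smul_monomial, ← monomial_neg, smul_eq_mul, Nat.add_sub_add_right,
      neg_mul, neg_neg]
  have hlinear : ((k : ℚ) + 1)⁻¹ • monomial (k + 1 - (0 + 1))
      (_root_.bernoulli (0 + 1) * ((k + 1).choose (0 + 1) : ℚ)) = -(C (1 / 2 : ℚ) * X ^ k) := by
    rw [C_mul_X_pow_eq_monomial, smul_monomial, ← monomial_neg, smul_eq_mul, zero_add,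
      add_tsub_cancel_right, _root_.bernoulli_one, Nat.choose_one_right]
    push_cast
    field_simp
  have hleading : ((k : ℚ) + 1)⁻¹ • monomial (k + 1 - 0)
      (_root_.bernoulli 0 * ((k + 1).choose 0 : ℚ)) = C ((k + 1 : ℚ)⁻¹) * X ^ (k + 1) := by
    simp [C_mul_X_pow_eq_monomial, smul_monomial]
  rw [Finset.sum_congr rfl hterm, Finset.sum_neg_distrib, hlinear, hleading]
  ring

lemma eq_of_comp_X_add_one_sub_eq {p q : ℚ[X]} (hΔ : p.comp (X + 1) - p = q.comp (X + 1) - q)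
    (hI : unitIntegral p = unitIntegral q) : p = q := by
  have hconst := eq_C_eval_zero_of_comp_X_add_one_eq (p := p - q) (by
    rw [sub_comp]; linear_combination hΔ)
  have h0 : (p - q).eval 0 = 0 := by
    rw [← unitIntegral_C ((p - q).eval 0), ← hconst, map_sub, hI, sub_self]
  rw [h0, map_zero] at hconst
  exact sub_eq_zero.mp hconst

noncomputable def tailSum : ℚ[X] →ₗ[ℚ] ℚ[X] := -LinearMap.id - antidiff

lemma tailSum_apply (p : ℚ[X]) : tailSum p = -p - antidiff p := rfl

lemma tailSum_comp_X_add_one (p : ℚ[X]) :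
    (tailSum p).comp (X + 1) = tailSum p - p.comp (X + 1) := by
  rw [tailSum_apply, sub_comp, neg_comp, antidiff_comp_X_add_one]
  ring

lemma unitIntegral_tailSum (p : ℚ[X]) : unitIntegral (tailSum p) = -unitIntegral p := by
  rw [tailSum_apply, map_sub, map_neg, unitIntegral_antidiff, sub_zero]

lemma tailSum_X_pow (k : ℕ) :
    tailSum (X ^ k)
      = -(C ((k + 1 : ℚ)⁻¹)) * X ^ (k + 1) - C (1 / 2 : ℚ) * X ^ k
        + ∑ q ∈ Finset.Icc 1 k,
            C ((ascPochhammer ℚ q).eval (-(k : ℚ))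
                * _root_.bernoulli (q + 1) / ((q + 1)! : ℚ)) * X ^ (k - q) := by
  have hhalf : (X ^ k : ℚ[X]) = C (1 / 2 : ℚ) * X ^ k + C (1 / 2 : ℚ) * X ^ k := by
    rw [← add_mul, ← C_add]
    norm_num
  rw [tailSum_apply, antidiff_X_pow, inv_succ_smul_bernoulli_succ]
  linear_combination (-1 : ℚ[X]) * hhalf

lemma unitIntegral_derivative_ascPochhammer (n : ℕ) :
    unitIntegral (derivative (ascPochhammer ℚ (n + 1))) = (n + 1)! := by
  simp [unitIntegral_derivative]

lemma tailSum_pow_apply_one (n : ℕ) :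
    (tailSum ^ n) 1 = ((-1) ^ n / (n + 1)! : ℚ) • derivative (ascPochhammer ℚ (n + 1)) := by
  induction n with
  | zero => simp
  | succ n ih =>
    rw [pow_succ', Module.End.mul_apply, ih]
    apply eq_of_comp_X_add_one_sub_eq
    · rw [tailSum_comp_X_add_one, smul_comp, smul_comp,
        derivative_ascPochhammer_succ_comp_X_add_one (n + 1), smul_add, sub_sub_cancel_left,
        add_sub_cancel_left, ← Nat.cast_smul_eq_nsmul ℚ, smul_smul, ← neg_smul]
      congr 1
      rw [Nat.factorial_succ (n + 1)]
      push_cast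
      field_simp
      ring
    · rw [unitIntegral_tailSum, map_smul, map_smul, unitIntegral_derivative_ascPochhammer,
        unitIntegral_derivative_ascPochhammer, smul_eq_mul, smul_eq_mul, Nat.factorial_succ (n + 1)]
      push_cast
      field_simp
      ring

lemma tailSum_pow_succ_apply_one_eval_neg_one (n : ℕ) :
    ((tailSum ^ (n + 1)) 1).eval (-1) = (-1) ^ n / ((n + 1) * (n + 2)) := by
  rw [tailSum_pow_apply_one, eval_smul, derivative_ascPochhammer_eval_neg_one, smul_eq_mul,
    Nat.factorial_succ (n + 1), Nat.factorial_succ n]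
  push_cast
  field_simp
  ring

end Polynomial

noncomputable def nmbpRevCons (l : List ℕ) : ℚ[X] →ₗ[ℚ] ℚ[X] :=
  lsum fun k => LinearMap.toSpanSingleton ℚ ℚ[X] (nmbpRev (k :: l))

lemma nmbpRevCons_X_pow (l : List ℕ) (k : ℕ) : nmbpRevCons l (X ^ k) = nmbpRev (k :: l) := by
  simp [nmbpRevCons, X_pow_eq_monomial]

lemma nmbpRev_cons_cons_s14 (k j : ℕ) (l : List ℕ) :
    nmbpRev (k :: j :: l) = nmbpRevCons l (X ^ j * tailSum (X ^ k)) := by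
  rw [nmbpRev, tailSum_X_pow]
  simp only [neg_mul, ← smul_eq_C_mul, mul_add, mul_sub, mul_neg, Finset.mul_sum, mul_smul_comm,
    ← pow_add, map_add, map_sub, map_neg, map_sum, map_smul, nmbpRevCons_X_pow, add_assoc]
  congr 1
  refine Finset.sum_congr rfl fun q hq => ?_
  rw [Nat.add_sub_assoc (Finset.mem_Icc.mp hq).2]

lemma nmbpRevCons_cons_zero (l : List ℕ) : nmbpRevCons (0 :: l) = nmbpRevCons l ∘ₗ tailSum := by
  ext k : 2
  simp only [LinearMap.comp_apply, ← X_pow_eq_monomial, nmbpRevCons_X_pow, nmbpRev_cons_cons_s14,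
    pow_zero, one_mul]

lemma nmbpRevCons_nil : nmbpRevCons [] = tailSum + 1 := by
  ext k : 2
  simp only [LinearMap.comp_apply, ← X_pow_eq_monomial, nmbpRevCons_X_pow, LinearMap.add_apply,
    Module.End.one_apply, tailSum_apply, antidiff_X_pow, nmbpRev, smul_eq_C_mul]
  ring

lemma nmbpRevCons_replicate_zero (m : ℕ) :
    nmbpRevCons (List.replicate m 0) = (tailSum + 1) * tailSum ^ m := by
  induction m with
  | zero => rw [List.replicate_zero, nmbpRevCons_nil, pow_zero, mul_one]
  | succ m ih =>
    rw [List.replicate_succ, nmbpRevCons_cons_zero, ih, ← Module.End.mul_eq_comp, mul_assoc,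
      ← pow_succ]

lemma nmbp_replicate_succ_zero (r : ℕ) :
    nmbp (List.replicate (r + 1) 0) = (tailSum ^ (r + 1)) 1 + (tailSum ^ r) 1 := by
  rw [nmbp, List.reverse_replicate, List.replicate_succ, ← pow_zero X, ← nmbpRevCons_X_pow,
    nmbpRevCons_replicate_zero, pow_zero, Module.End.mul_apply, LinearMap.add_apply,
    Module.End.one_apply, pow_succ', Module.End.mul_apply]

/-- `ζ_{r+1}(0|−1) = (−1)^{r+1}·2/((r+2)(r+1)r)` for `r ≥ 1`. -/
theorem nmbp_replicate_zero_eval_neg_one (r : ℕ) (hr : 1 ≤ r) :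
    (nmbp (List.replicate (r + 1) 0)).eval (-1)
      = (-1 : ℚ) ^ (r + 1) * 2 / (((r : ℚ) + 2) * ((r : ℚ) + 1) * (r : ℚ)) := by
  obtain ⟨s, rfl⟩ := Nat.exists_eq_add_of_le' hr
  rw [nmbp_replicate_succ_zero, eval_add, tailSum_pow_succ_apply_one_eval_neg_one,
    tailSum_pow_succ_apply_one_eval_neg_one]
  push_cast
  field_simp
  ring
end

section
/- For every integer r ≥ 1 and every tuple of non-negative integers (n₁,…,n_r) with n₁ ≥ 1 (i.e. the first entry −n₁ is strictly negative), the normalized multiple Bernoulli polynomial satisfies ζ(−n₁,…,−n_r|1) = ζ(−n₁,…,−n_r|0). -/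
open Polynomial

lemma getLastD_mono {l : List ℕ} {a b : ℕ} (h : a ≤ b) : l.getLastD a ≤ l.getLastD b := by
  cases l with
  | nil => simpa
  | cons x xs => rw [List.getLastD_cons, List.getLastD_cons]

lemma getLastD_concat (xs : List ℕ) (a d : ℕ) : (xs ++ [a]).getLastD d = a := by
  induction xs generalizing d with
  | nil => rfl
  | cons x xs ih => rw [List.cons_append, List.getLastD_cons, ih]

lemma nmbpRev_aux : ∀ (l : List ℕ) (k : ℕ), 1 ≤ l.getLastD k →
    (nmbpRev (k :: l)).eval 1 = (nmbpRev (k :: l)).eval 0 := by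
  intro l
  induction l with
  | nil =>
    intro k hk
    simp only [List.getLastD_nil] at hk
    simp only [nmbpRev]
    rw [eval_mul, eval_mul, Polynomial.bernoulli_eval_one, Polynomial.bernoulli_eval_zero,
      bernoulli_eq_bernoulli'_of_ne_one (by omega)]
    simp
  | cons km rest ih =>
    intro k hk
    simp only [List.getLastD_cons] at hk
    have h : ∀ j, km ≤ j → (nmbpRev (j :: rest)).eval 1 = (nmbpRev (j :: rest)).eval 0 := by
      intro j hj
      exact ih j (le_trans hk (getLastD_mono hj))
    simp only [nmbpRev]
    simp only [eval_add, eval_sub, eval_mul, eval_neg, eval_C, eval_finset_sum]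
    rw [h _ (by omega), h _ (by omega)]
    congr 1
    refine Finset.sum_congr rfl fun q hq => ?_
    rw [Finset.mem_Icc] at hq
    rw [h _ (by omega)]

/-- If the first entry `−n₁` is strictly negative, then
`ζ(−n₁,…,−n_r|1) = ζ(−n₁,…,−n_r|0)`. -/
theorem nmbp_eval_one_eq_eval_zero (n₁ : ℕ) (ns : List ℕ) (hn₁ : 1 ≤ n₁) :
    (nmbp (n₁ :: ns)).eval 1 = (nmbp (n₁ :: ns)).eval 0 := by
  rw [nmbp]
  have hrev : (n₁ :: ns).reverse = ns.reverse ++ [n₁] := by simp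
  rcases h : ns.reverse ++ [n₁] with _ | ⟨k, l⟩
  · exact absurd h (by simp)
  · rw [hrev, h]
    apply nmbpRev_aux
    have : (k :: l).getLastD 0 = n₁ := by rw [← h, getLastD_concat]
    rw [List.getLastD_cons] at this
    omega
end

section
/- The Hurwitz polyzeta functions, together with the constant function 1, are linearly independent over ℂ: in the ℂ-vector space of functions from the half-plane {z ∈ ℂ : Re z > 0} to ℂ, the family consisting of the constant function 1 together with the functions z ↦ ζ(k₁,…,k_r|z), indexed by all tuples (k₁,…,k_r) of integers with r ≥ 1, k_j ≥ 1 for all j, and k_r ≥ 2, is linearly independent over ℂ. -/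
/-- Index type: tuples `(k₁,…,k_r)` of integers with `r ≥ 1`, each `k_j ≥ 1`,
and `k_r ≥ 2`. -/
def HurwitzIndex : Type :=
  {l : List ℕ // l ≠ [] ∧ (∀ k ∈ l, 1 ≤ k) ∧ 2 ≤ l.getLastD 0}

/-!
Write `ζ(t|x)` for `hurwitzPolyzeta` at a list `t` of naturals and a real `x > 1`. Splitting off
the tuples with `n₁ = 0` gives `ζ(k :: t|x) = x⁻ᵏ ζ(t|x + 1) + ζ(k :: t|x + 1)`, so `ζ(t|x + 1)` is
a combination of the `ζ(t.drop j|x)` with coefficients `±x^-(k₁ + ⋯ + k_j)`.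

We show that no nontrivial relation `∑ₜ A_t(x) ζ(t|x) = 0` on `x > 1` has coefficients that are
rational functions without poles in `Re z > 0`, by induction on the maximal length `r + 1` of the
`t`. Subtracting the relation at `x + 1` from the one at `x` and expanding gives a derived
relation in which the coefficient of each `t` of length `r + 1` is `A_t(x) - A_t(x + 1)`. After
clearing denominators the top coefficients `A_t` are polynomials; by induction on their degree the
derived top coefficients vanish, so the `A_t` are periodic, hence constant. Then the derived
relation involves only lengths `≤ r`, so all its coefficients vanish; at a `w` of length `r` this
reads `c(x) = B(x + 1) - B(x)` with `c(x) = ∑ₖ c_{k :: w} x⁻ᵏ` and `B` rational. Hence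
`B(x + n) - B(x) = ∑_{i < n} c(x + i)`, and at a negative integer `-j` where `B` is regular only
the term `c(x + j)` has a pole, so every `c_{k :: w}` vanishes.
-/

open Finset Polynomial

noncomputable section

theorem summable_pi_prod {g : ℕ → ℝ} (hg0 : 0 ≤ g) (hg : Summable g) (r : ℕ) :
    Summable fun n : Fin r → ℕ => ∏ j, g (n j) := by
  classical
  refine summable_of_sum_le (fun n => prod_nonneg fun j _ => hg0 _) (c := (∑' i, g i) ^ r)
    fun u => ?_
  calc ∑ n ∈ u, ∏ j, g (n j)
      ≤ ∑ n ∈ Fintype.piFinset fun j => u.image (· j), ∏ j, g (n j) :=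
        sum_le_sum_of_subset_of_nonneg (fun n hn => Fintype.mem_piFinset.2 fun j =>
          mem_image_of_mem _ hn) fun n _ _ => prod_nonneg fun j _ => hg0 _
    _ = ∏ j : Fin r, ∑ i ∈ u.image (· j), g i := (prod_univ_sum _ fun _ => g).symm
    _ ≤ (∑' i, g i) ^ r := by
        rw [← Fin.prod_const]
        exact prod_le_prod (fun j _ => sum_nonneg fun i _ => hg0 i)
          fun j _ => hg.sum_le_tsum _ fun i _ => hg0 i

theorem prod_rpow_neg_le {r : ℕ} (a σ : Fin r → ℝ) (j₀ : Fin r) (ha : ∀ j, 1 ≤ a j)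
    (hmax : ∀ j, a j ≤ a j₀) (hσ : ∀ j, 1 ≤ σ j) (hσ₀ : 2 ≤ σ j₀) :
    ∏ j, a j ^ (-σ j) ≤ ∏ j, a j ^ (-(1 + (r : ℝ)⁻¹)) := by
  set b := a j₀
  set δ : ℝ := (r : ℝ)⁻¹
  have hb : 0 < b := zero_lt_one.trans_le (ha j₀)
  have hr : (r : ℝ) ≠ 0 := by have := j₀.pos; positivity
  -- Each factor pays `b ^ δ` out of its own decay, and the factor at `j₀` one more `b⁻¹`.
  have hfactor : ∀ j,
      a j ^ (-σ j) ≤ a j ^ (-(1 + δ)) * (b ^ δ * if j = j₀ then b⁻¹ else 1) := by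
    intro j
    split_ifs with hj
    · rw [hj]
      calc b ^ (-σ j₀) ≤ b ^ (-2 : ℝ) := Real.rpow_le_rpow_of_exponent_le (ha j₀) (by linarith)
        _ = b ^ (-(1 + δ)) * (b ^ δ * b⁻¹) := by
          rw [← Real.rpow_neg_one, ← Real.rpow_add hb, ← Real.rpow_add hb]
          ring_nf
    · calc a j ^ (-σ j) ≤ a j ^ (-1 : ℝ) :=
            Real.rpow_le_rpow_of_exponent_le (ha j) (by linarith [hσ j])
        _ = a j ^ (-(1 + δ)) * a j ^ δ := by
            rw [← Real.rpow_add (zero_lt_one.trans_le (ha j))]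
            ring_nf
        _ ≤ a j ^ (-(1 + δ)) * (b ^ δ * 1) := by
            rw [mul_one]
            have := zero_le_one.trans (ha j)
            gcongr
            exact hmax j
  calc ∏ j, a j ^ (-σ j)
      ≤ ∏ j, a j ^ (-(1 + δ)) * (b ^ δ * if j = j₀ then b⁻¹ else 1) :=
        prod_le_prod (fun j _ => Real.rpow_nonneg (zero_le_one.trans (ha j)) _)
          fun j _ => hfactor j
    _ = ∏ j, a j ^ (-(1 + δ)) := by
        rw [prod_mul_distrib, prod_mul_distrib, prod_ite_eq', if_pos (mem_univ _), prod_const,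
          card_univ, Fintype.card_fin, ← Real.rpow_mul_natCast hb.le, inv_mul_cancel₀ hr,
          Real.rpow_one, mul_inv_cancel₀ hb.ne', mul_one]

namespace HurwitzPolyzeta

def term (s : List ℂ) (z : ℂ) (n : {f : Fin s.length → ℕ // StrictMono f}) : ℂ :=
  ∏ j, (z + (n.1 j : ℂ)) ^ (-s.get j)

def consZeroEquiv (r : ℕ) :
    {f : Fin r → ℕ // StrictMono f} ≃
      {n : {f : Fin (r + 1) → ℕ // StrictMono f} // n.1 0 = 0} where
  toFun m := ⟨⟨Fin.cons 0 (m.1 · + 1), Fin.strictMono_cons.2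
    ⟨fun _ => Nat.succ_pos _, fun _ _ h => Nat.succ_lt_succ (m.2 h)⟩⟩, rfl⟩
  invFun n := ⟨(n.1.1 ·.succ - 1), fun a b h => by
    have := n.1.2 (Fin.succ_lt_succ_iff.2 h)
    have := n.1.2 a.succ_pos
    dsimp only
    omega⟩
  left_inv m := by ext j; simp
  right_inv n := by
    ext j
    induction j using Fin.cases with
    | zero => exact n.2.symm
    | succ j =>
      have := n.1.2 j.succ_pos
      have := n.2
      simp only [Fin.cons_succ]
      omega

def succEquiv (r : ℕ) :
    {f : Fin (r + 1) → ℕ // StrictMono f} ≃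
      {n : {f : Fin (r + 1) → ℕ // StrictMono f} // n.1 0 ≠ 0} where
  toFun m := ⟨⟨(m.1 · + 1), fun _ _ h => Nat.succ_lt_succ (m.2 h)⟩, Nat.succ_ne_zero _⟩
  invFun n := ⟨(n.1.1 · - 1), fun a b h => by
    have := n.1.2 h
    have := n.1.2.monotone (Fin.zero_le a)
    have := n.2
    dsimp only
    omega⟩
  left_inv m := by ext j; simp
  right_inv n := by
    ext j
    have := n.1.2.monotone (Fin.zero_le j)
    have := n.2
    dsimp only
    omega

theorem term_cons_consZeroEquiv (s₀ : ℂ) (s : List ℂ) (z : ℂ)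
    (m : {f : Fin s.length → ℕ // StrictMono f}) :
    term (s₀ :: s) z (consZeroEquiv _ m) = z ^ (-s₀) * term s (z + 1) m := by
  show ∏ j : Fin (s.length + 1), _ = _
  rw [Fin.prod_univ_succ]
  congr 1
  · simp [consZeroEquiv]
  · refine prod_congr rfl fun j _ => ?_
    simp only [consZeroEquiv, Equiv.coe_fn_mk, Fin.cons_succ, Nat.cast_add, Nat.cast_one]
    congr 1
    ring

theorem term_cons_succEquiv (s₀ : ℂ) (s : List ℂ) (z : ℂ)
    (m : {f : Fin (s.length + 1) → ℕ // StrictMono f}) :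
    term (s₀ :: s) z (succEquiv _ m) = term (s₀ :: s) (z + 1) m := by
  refine prod_congr rfl fun j _ => ?_
  simp only [succEquiv, Equiv.coe_fn_mk, Nat.cast_add, Nat.cast_one]
  congr 1
  ring

theorem summable_term {s : List ℂ} (hs : ∀ σ ∈ s, 1 ≤ σ.re)
    (hlast : ∀ σ ∈ s.getLast?, 2 ≤ σ.re) {x : ℝ} (hx : 1 ≤ x) : Summable (term s x) := by
  rcases Nat.eq_zero_or_pos s.length with hlen | hlen
  · have : Subsingleton {f : Fin s.length → ℕ // StrictMono f} :=
      ⟨fun a b => Subtype.ext (funext fun j => (Fin.cast hlen j).elim0)⟩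
    exact .of_finite
  set δ : ℝ := (s.length : ℝ)⁻¹
  have hδ : 0 < δ := by positivity
  let j₀ : Fin s.length := ⟨s.length - 1, by omega⟩
  have hσ₀ : 2 ≤ (s.get j₀).re := hlast _ (by simp [List.getLast?_eq_getElem?, j₀])
  have hg : Summable fun n : ℕ => ((n : ℝ) + 1) ^ (-(1 + δ)) := by
    simpa using (summable_nat_add_iff 1).2
      (Real.summable_nat_rpow.2 (by linarith : -(1 + δ) < -1))
  refine Summable.of_norm_bounded ((summable_pi_prod (fun n => Real.rpow_nonneg (by positivity) _)
    hg _).comp_injective Subtype.val_injective) fun n => ?_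
  have hfactor : ∀ j,
      ‖((x : ℂ) + (n.1 j : ℂ)) ^ (-s.get j)‖ ≤ ((n.1 j : ℝ) + 1) ^ (-(s.get j).re) := by
    intro j
    rw [show (x : ℂ) + (n.1 j : ℂ) = ((x + n.1 j : ℝ) : ℂ) by push_cast; ring,
      Complex.norm_cpow_eq_rpow_re_of_pos (by positivity), Complex.neg_re]
    exact Real.rpow_le_rpow_of_nonpos (by positivity) (by linarith)
      (by linarith [hs _ (s.get_mem j)])
  calc ‖term s x n‖ ≤ ∏ j, ((n.1 j : ℝ) + 1) ^ (-(s.get j).re) := by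
        rw [term, norm_prod]
        exact prod_le_prod (fun _ _ => norm_nonneg _) fun j _ => hfactor j
    _ ≤ ∏ j, ((n.1 j : ℝ) + 1) ^ (-(1 + δ)) :=
        prod_rpow_neg_le _ _ j₀ (fun j => by simp) (fun j => by
          have : j ≤ j₀ := Fin.le_def.2 (by simp only [j₀]; omega)
          exact_mod_cast Nat.add_le_add_right (n.2.monotone this) 1)
          (fun j => hs _ (s.get_mem j)) hσ₀

def Admissible (t : List ℕ) : Prop :=
  (∀ k ∈ t, 1 ≤ k) ∧ ∀ k ∈ t.getLast?, 2 ≤ k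

theorem Admissible.nil : Admissible [] := ⟨by simp, by simp⟩

theorem Admissible.of_suffix {t w : List ℕ} (ht : Admissible t) (hw : w <:+ t) :
    Admissible w := by
  obtain ⟨u, rfl⟩ := hw
  refine ⟨fun k hk => ht.1 k (List.mem_append_right u hk), fun k hk => ht.2 k ?_⟩
  simp_all [List.getLast?_append]

theorem summable_term_map_natCast {t : List ℕ} (ht : Admissible t) {x : ℝ} (hx : 1 ≤ x) :
    Summable (term (t.map (↑)) x) :=
  summable_term (by simpa using fun k hk => ht.1 k hk)
    (by simpa [List.getLast?_map] using fun k hk => ht.2 k hk) hx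

theorem _root_.HurwitzIndex.admissible (l : HurwitzIndex) : Admissible l.1 := by
  obtain ⟨l, -, h1, h2⟩ := l
  exact ⟨h1, fun k hk => by rwa [List.getLastD_eq_getLast?, hk, Option.getD_some] at h2⟩

end HurwitzPolyzeta

open HurwitzPolyzeta

theorem hurwitzPolyzeta_nil (z : ℂ) : hurwitzPolyzeta [] z = 1 := by
  have : Unique {f : Fin 0 → ℕ // StrictMono f} :=
    ⟨⟨⟨finZeroElim, fun a => a.elim0⟩⟩, fun _ => Subtype.ext (funext finZeroElim)⟩
  exact (hasSum_unique _).tsum_eq.trans (by simp)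

theorem hurwitzPolyzeta_cons (s₀ : ℂ) (s : List ℂ) {z : ℂ} (h : Summable (term (s₀ :: s) z)) :
    hurwitzPolyzeta (s₀ :: s) z =
      z ^ (-s₀) * hurwitzPolyzeta s (z + 1) + hurwitzPolyzeta (s₀ :: s) (z + 1) := by
  show ∑' n, term (s₀ :: s) z n =
    z ^ (-s₀) * ∑' n, term s (z + 1) n + ∑' n, term (s₀ :: s) (z + 1) n
  rw [← (h.subtype {n | n.1 0 = 0}).tsum_add_tsum_compl (h.subtype _)]
  congr 1
  · exact ((consZeroEquiv _).tsum_eq (fun n => term (s₀ :: s) z n.1)).symm.trans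
      ((tsum_congr (term_cons_consZeroEquiv s₀ s z)).trans tsum_mul_left)
  · exact ((succEquiv _).tsum_eq (fun n => term (s₀ :: s) z n.1)).symm.trans
      (tsum_congr (term_cons_succEquiv s₀ s z))

theorem hurwitzPolyzeta_cons_natCast {k : ℕ} {t : List ℕ} (ht : Admissible (k :: t)) {x : ℝ}
    (hx : 1 ≤ x) : hurwitzPolyzeta ((k :: t).map (↑)) x =
      ((x : ℂ) ^ k)⁻¹ * hurwitzPolyzeta (t.map (↑)) (x + 1) +
        hurwitzPolyzeta ((k :: t).map (↑)) (x + 1) := by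
  rw [List.map_cons, hurwitzPolyzeta_cons _ _ (summable_term_map_natCast ht hx),
    Complex.cpow_neg, Complex.cpow_natCast]

theorem hurwitzPolyzeta_add_one {t : List ℕ} (ht : Admissible t) {x : ℝ} (hx : 1 ≤ x) :
    hurwitzPolyzeta (t.map (↑)) (x + 1) = ∑ j ∈ range (t.length + 1),
      (-1) ^ j * ((x : ℂ) ^ (t.take j).sum)⁻¹ * hurwitzPolyzeta ((t.drop j).map (↑)) x := by
  induction t with
  | nil => simp [hurwitzPolyzeta_nil]
  | cons k t ih =>
    have hterm : ∀ j, (-1 : ℂ) ^ (j + 1) * ((x : ℂ) ^ ((k :: t).take (j + 1)).sum)⁻¹ *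
        hurwitzPolyzeta (((k :: t).drop (j + 1)).map (↑)) x = -((x : ℂ) ^ k)⁻¹ *
          ((-1) ^ j * ((x : ℂ) ^ (t.take j).sum)⁻¹ * hurwitzPolyzeta ((t.drop j).map (↑)) x) := by
      intro j
      simp only [List.take_succ_cons, List.sum_cons, List.drop_succ_cons, pow_add, mul_inv]
      ring
    rw [List.length_cons, sum_range_succ']
    simp only [hterm, ← mul_sum, ← ih (ht.of_suffix (List.suffix_cons k t)), pow_zero,
      List.take_zero, List.sum_nil, inv_one, one_mul, List.drop_zero]
    rw [hurwitzPolyzeta_cons_natCast ht hx]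
    ring

/-- Functions that agree on `(1, ∞)` with a rational function `p / q` where `q` has no zero
in `U`. -/
def ratFuncRegularOn (U : Set ℂ) : Subalgebra ℂ (ℝ → ℂ) where
  carrier := {B | ∃ p q : ℂ[X], (∀ z ∈ U, q.eval z ≠ 0) ∧
    ∀ x : ℝ, 1 < x → B x * q.eval (x : ℂ) = p.eval (x : ℂ)}
  mul_mem' := by
    rintro B B' ⟨p, q, hq, hB⟩ ⟨p', q', hq', hB'⟩
    refine ⟨p * p', q * q', fun z hz => by simpa using ⟨hq z hz, hq' z hz⟩, fun x hx => ?_⟩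
    simp only [Pi.mul_apply, eval_mul, ← hB x hx, ← hB' x hx]
    ring
  add_mem' := by
    rintro B B' ⟨p, q, hq, hB⟩ ⟨p', q', hq', hB'⟩
    refine ⟨p * q' + p' * q, q * q', fun z hz => by simpa using ⟨hq z hz, hq' z hz⟩,
      fun x hx => ?_⟩
    simp only [Pi.add_apply, eval_mul, eval_add, ← hB x hx, ← hB' x hx]
    ring
  algebraMap_mem' c := ⟨C c, 1, by simp, by simp⟩

local notation "𝓡" => ratFuncRegularOn (Complex.re ⁻¹' Set.Ioi 0)

namespace ratFuncRegularOn

variable {U V : Set ℂ}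

theorem polynomial_eval_mem (P : ℂ[X]) : (fun x : ℝ => P.eval (x : ℂ)) ∈ ratFuncRegularOn U :=
  ⟨P, 1, by simp, by simp⟩

theorem inv_pow_mem (hU : (0 : ℂ) ∉ U) (k : ℕ) :
    (fun x : ℝ => ((x : ℂ) ^ k)⁻¹) ∈ ratFuncRegularOn U :=
  ⟨1, X ^ k, fun z hz => by simpa using pow_ne_zero k (ne_of_mem_of_not_mem hz hU),
    fun x hx => by
      simpa using inv_mul_cancel₀ (pow_ne_zero k (Complex.ofReal_ne_zero.2 (by linarith)))⟩

theorem comp_add_mem {B : ℝ → ℂ} (hB : B ∈ ratFuncRegularOn U) {c : ℝ} (hc : 0 ≤ c)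
    (hUV : ∀ z ∈ V, z + c ∈ U) : (fun x => B (x + c)) ∈ ratFuncRegularOn V := by
  obtain ⟨p, q, hq, hB⟩ := hB
  refine ⟨p.comp (X + C (c : ℂ)), q.comp (X + C (c : ℂ)),
    fun z hz => by simpa using hq _ (hUV z hz), fun x hx => ?_⟩
  simpa using hB (x + c) (by linarith)

theorem eval_eq_zero_of_mul_pow_eq {B : ℝ → ℂ} (hB : B ∈ ratFuncRegularOn U) {a : ℂ}
    (ha : a ∈ U) {N : ℕ} (hN : N ≠ 0) {R : ℂ[X]}
    (h : ∀ x : ℝ, 1 < x → B x * ((x : ℂ) - a) ^ N = R.eval (x : ℂ)) : R.eval a = 0 := by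
  obtain ⟨p, q, hq, hB⟩ := hB
  have hpoly : R * q = p * (X - C a) ^ N := by
    refine eq_of_infinite_eval_eq _ _ ((Set.Ioi_infinite (1 : ℝ)).image
      Complex.ofReal_injective.injOn |>.mono ?_)
    rintro _ ⟨x, hx, rfl⟩
    simp only [eval_mul, eval_pow, eval_sub, eval_X, eval_C, Set.mem_ofPred_eq, ← h x hx, ← hB x hx]
    ring
  simpa [hN, hq a ha] using congr_arg (eval a) hpoly

theorem eval_zero_eq_zero_of_shift_sub_eq {B : ℝ → ℂ} (hB : B ∈ 𝓡) {N : ℕ} (hN : N ≠ 0)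
    {R : ℂ[X]} (h : ∀ x : ℝ, 1 < x → B (x + 1) - B x = R.eval (x : ℂ) * ((x : ℂ) ^ N)⁻¹) :
    R.eval 0 = 0 := by
  obtain ⟨p, q, hq, hBpq⟩ := id hB
  obtain ⟨j₀, hj₀⟩ : ∃ j₀ : ℕ, q.eval (-(j₀ : ℂ)) ≠ 0 := by
    by_contra! hroots
    have : q = 0 := eq_zero_of_infinite_isRoot q <|
      (Set.infinite_range_of_injective (f := fun j : ℕ => -(j : ℂ)) fun a b h => by
        simpa using h).mono (by rintro _ ⟨j, rfl⟩; exact hroots j)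
    exact hq 1 (by simp) (by simp [this])
  set g : ℝ → ℂ := fun y => R.eval (y : ℂ) * ((y : ℂ) ^ N)⁻¹
  set n := j₀ + 1
  have htel : ∀ x : ℝ, 1 < x → B (x + n) - B x = ∑ i ∈ range n, g (x + i) := by
    intro x hx
    have := sum_range_sub (fun i : ℕ => B (x + i)) n
    simp only [Nat.cast_add, Nat.cast_one, Nat.cast_zero, add_zero, ← add_assoc] at this
    rw [← this]
    exact sum_congr rfl fun i _ => h (x + i) (by have := i.cast_nonneg (α := ℝ); linarith)
  -- After `n` steps the summand `g (x + j₀)` has a pole at `-j₀`, where nothing else does.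
  set B' : ℝ → ℂ := (fun x => B (x + n)) - B - ∑ i ∈ (range n).erase j₀, fun x => g (x + i)
  have hB' : B' ∈ ratFuncRegularOn {-(j₀ : ℂ)} := by
    refine sub_mem (sub_mem (comp_add_mem hB (by positivity) (by simp [n]))
      ⟨p, q, by simpa, hBpq⟩) (sum_mem fun i hi => comp_add_mem (U := {0}ᶜ)
        (mul_mem (polynomial_eval_mem R) (inv_pow_mem (by simp) N)) (by positivity) ?_)
    simp only [Set.mem_singleton_iff, Set.mem_compl_iff, forall_eq]
    intro h0
    exact (mem_erase.1 hi).1 (by exact_mod_cast (neg_add_eq_zero.1 h0).symm)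
  have hB'eq : ∀ x : ℝ, 1 < x →
      B' x * ((x : ℂ) - -(j₀ : ℂ)) ^ N = (R.comp (X + C (j₀ : ℂ))).eval (x : ℂ) := by
    intro x hx
    have hx0 : (x : ℂ) + j₀ ≠ 0 := by exact_mod_cast (by positivity : x + j₀ ≠ 0)
    have : B' x = g (x + j₀) := by
      simp only [B', Pi.sub_apply, Finset.sum_apply, htel x hx]
      rw [← add_sum_erase _ _ (mem_range.2 (Nat.lt_succ_self j₀))]
      ring
    simp [this, g, hx0]
  simpa using eval_eq_zero_of_mul_pow_eq hB' rfl hN hB'eq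

theorem eq_zero_of_sum_mul_inv_pow_eq_shift_sub {ι : Type*} {s : Finset ι} {k : ι → ℕ}
    (hk : Set.InjOn k s) (hk1 : ∀ i ∈ s, 1 ≤ k i) {c : ι → ℂ} {B : ℝ → ℂ} (hB : B ∈ 𝓡)
    (h : ∀ x : ℝ, 1 < x → ∑ i ∈ s, c i * ((x : ℂ) ^ k i)⁻¹ = B (x + 1) - B x) :
    ∀ i ∈ s, c i = 0 := by
  classical
  induction s using Finset.induction_on_max_value k with
  | empty => simp
  | insert a s ha hmax ih =>
    have hlt : ∀ i ∈ s, k i < k a := fun i hi => (hmax i hi).lt_of_ne fun he =>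
      ha (hk (mem_insert_of_mem hi) (mem_insert_self a s) he ▸ hi)
    -- Multiplied by `x ^ k a`, the sum becomes a polynomial whose value at `0` is `c a`.
    have hca : c a = 0 := by
      have hR := eval_zero_eq_zero_of_shift_sub_eq hB (N := k a)
        (by have := hk1 a (mem_insert_self a s); omega)
        (R := ∑ i ∈ insert a s, C (c i) * X ^ (k a - k i)) fun x hx => by
          have hx0 : (x : ℂ) ≠ 0 := by exact_mod_cast (by linarith : x ≠ 0)
          rw [← h x hx, eval_finsetSum, sum_mul]
          refine sum_congr rfl fun i hi => ?_
          have hki : k i ≤ k a :=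
            (mem_insert.1 hi).elim (fun h => h ▸ le_rfl) fun hi => (hlt i hi).le
          simp only [eval_mul, eval_C, eval_pow, eval_X, pow_sub₀ _ hx0 hki]
          field_simp
      rwa [sum_insert ha, eval_add, eval_finsetSum, sum_eq_zero fun i hi => by
        simp [(Nat.sub_pos_of_lt (hlt i hi)).ne'], add_zero, Nat.sub_self, pow_zero, mul_one,
        eval_C] at hR
    intro i hi
    rcases mem_insert.1 hi with rfl | hi
    · exact hca
    refine ih (hk.mono (by simp)) (fun i hi => hk1 i (mem_insert_of_mem hi)) (fun x hx => ?_) i hi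
    rw [← h x hx, sum_insert ha, hca, zero_mul, zero_add]

theorem exists_common_denominator {ι : Type*} (s : Finset ι) {A : ι → ℝ → ℂ}
    (hA : ∀ i ∈ s, A i ∈ 𝓡) : ∃ D ∈ 𝓡, (∀ x : ℝ, 1 < x → D x ≠ 0) ∧
      ∀ i ∈ s, ∃ P : ℂ[X], ∀ x : ℝ, 1 < x → D x * A i x = P.eval (x : ℂ) := by
  classical
  choose! p q hq hpq using hA
  refine ⟨fun x => (∏ i ∈ s, q i).eval (x : ℂ), polynomial_eval_mem _, fun x hx => ?_,
    fun i hi => ⟨p i * ∏ j ∈ s.erase i, q j, fun x hx => ?_⟩⟩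
  · dsimp only
    rw [eval_prod]
    exact prod_ne_zero_iff.2 fun i hi => hq i hi x (by simpa using zero_lt_one.trans hx)
  · dsimp only
    rw [← mul_prod_erase s q hi, eval_mul, eval_mul, ← hpq i hi x hx]
    ring

end ratFuncRegularOn

open ratFuncRegularOn

theorem Polynomial.natDegree_taylor_sub_le {R : Type*} [CommRing R] (r : R) {P : R[X]} {D : ℕ}
    (hP : P.natDegree ≤ D + 1) : (taylor r P - P).natDegree ≤ D := by
  rcases eq_or_ne (taylor r P - P) 0 with h0 | h0
  · simp [h0]
  have hP0 : taylor r P ≠ 0 := fun h => h0 (by simp_all)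
  have := natDegree_lt_natDegree h0
    (degree_sub_lt_left (degree_taylor P r) hP0 (leadingCoeff_taylor r P))
  rw [natDegree_taylor] at this
  omega

theorem Polynomial.eq_C_of_eval_add_one_eq {P : ℂ[X]}
    (h : ∀ x : ℝ, 1 < x → P.eval ((x + 1 : ℝ) : ℂ) = P.eval (x : ℂ)) : P = C (P.eval 2) := by
  have hm : ∀ m : ℕ, P.eval ((2 + m : ℝ) : ℂ) = P.eval 2 := by
    intro m
    induction m with
    | zero => simp
    | succ m ih =>
      rw [Nat.cast_succ, ← add_assoc, h _ (by have := m.cast_nonneg (α := ℝ); linarith), ih]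
  refine eq_of_infinite_eval_eq _ _ ((Set.infinite_range_of_injective
    (f := fun m : ℕ => ((2 + m : ℝ) : ℂ)) fun a b hab => by simpa using hab).mono ?_)
  rintro _ ⟨m, rfl⟩
  simpa using hm m

theorem sum_range_ite_drop_eq {M : Type*} [AddCommMonoid M] {t w : List ℕ}
    (h : t.length ≤ w.length + 1) (f : ℕ → M) :
    ∑ j ∈ range (t.length + 1), (if t.drop j = w then f j else 0) =
      (if t = w then f 0 else 0) + if t ≠ [] ∧ t.tail = w then f 1 else 0 := by
  cases t with
  | nil => simp
  | cons k t =>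
    rw [List.length_cons, sum_range_succ', sum_range_succ', sum_eq_zero fun j hj => ?_]
    · simp [add_comm]
    · rw [if_neg]
      intro hjw
      have := congr_arg List.length hjw
      simp only [List.drop_succ_cons, List.length_drop, List.length_cons] at this h
      have := mem_range.1 hj
      omega

namespace HurwitzPolyzeta

def IsRelation (T : Finset (List ℕ)) (A : List ℕ → ℝ → ℂ) : Prop :=
  (∀ t ∈ T, Admissible t ∧ A t ∈ 𝓡) ∧
    ∀ x : ℝ, 1 < x → ∑ t ∈ T, A t x * hurwitzPolyzeta (t.map (↑)) x = 0

def derivedSupport (T : Finset (List ℕ)) : Finset (List ℕ) :=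
  T.biUnion fun t => t.tails.toFinset

/-- The coefficients of `∑ t, A t x * ζ(t|x) - ∑ t, A t (x + 1) * ζ(t|x + 1)` once each
`ζ(t|x + 1)` is expanded by `hurwitzPolyzeta_add_one`. -/
def derivedCoeff (T : Finset (List ℕ)) (A : List ℕ → ℝ → ℂ) (w : List ℕ) : ℝ → ℂ :=
  (if w ∈ T then A w else 0) - ∑ t ∈ T, ∑ j ∈ range (t.length + 1),
    if t.drop j = w then
      (-1 : ℂ) ^ j • ((fun x : ℝ => ((x : ℂ) ^ (t.take j).sum)⁻¹) * fun x => A t (x + 1))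
    else 0

def RelationsVanish (r : ℕ) : Prop :=
  ∀ T A, IsRelation T A → (∀ t ∈ T, t.length ≤ r) → ∀ t ∈ T, ∀ x : ℝ, 1 < x → A t x = 0

section

variable {T : Finset (List ℕ)} {A : List ℕ → ℝ → ℂ}

theorem mem_derivedSupport {w : List ℕ} : w ∈ derivedSupport T ↔ ∃ t ∈ T, w <:+ t := by
  simp [derivedSupport]

theorem derivedCoeff_apply (w : List ℕ) (x : ℝ) :
    derivedCoeff T A w x = (if w ∈ T then A w x else 0) - ∑ t ∈ T, ∑ j ∈ range (t.length + 1),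
      if t.drop j = w then (-1) ^ j * ((x : ℂ) ^ (t.take j).sum)⁻¹ * A t (x + 1) else 0 := by
  simp only [derivedCoeff, Pi.sub_apply, Finset.sum_apply, ite_apply, Pi.smul_apply,
    Pi.mul_apply, Pi.zero_apply, smul_eq_mul, mul_assoc]

theorem sum_derivedCoeff_mul (hT : ∀ t ∈ T, Admissible t) {x : ℝ} (hx : 1 ≤ x) :
    ∑ w ∈ derivedSupport T, derivedCoeff T A w x * hurwitzPolyzeta (w.map (↑)) x =
      ∑ t ∈ T, A t x * hurwitzPolyzeta (t.map (↑)) x -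
        ∑ t ∈ T, A t (x + 1) * hurwitzPolyzeta (t.map (↑)) ↑(x + 1) := by
  have hsub : T ⊆ derivedSupport T := fun t ht =>
    mem_derivedSupport.2 ⟨t, ht, List.suffix_refl t⟩
  simp only [derivedCoeff_apply, sub_mul, sum_sub_distrib, ite_mul, zero_mul, sum_mul]
  congr 1
  · rw [sum_ite_mem, inter_eq_right.2 hsub]
  · rw [sum_comm]
    refine sum_congr rfl fun t ht => ?_
    rw [sum_comm, Complex.ofReal_add, Complex.ofReal_one, hurwitzPolyzeta_add_one (hT t ht) hx,
      mul_sum]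
    refine sum_congr rfl fun j _ => ?_
    rw [sum_ite_eq, if_pos (mem_derivedSupport.2 ⟨t, ht, List.drop_suffix j t⟩)]
    ring

theorem derivedCoeff_apply_of_length_le {w : List ℕ} (hT : ∀ t ∈ T, t.length ≤ w.length + 1)
    (x : ℝ) : derivedCoeff T A w x = (if w ∈ T then A w x - A w (x + 1) else 0) +
      ∑ t ∈ T with t ≠ [] ∧ t.tail = w, ((x : ℂ) ^ (t.take 1).sum)⁻¹ * A t (x + 1) := by
  rw [derivedCoeff_apply, sum_congr rfl fun t ht => sum_range_ite_drop_eq (hT t ht) _,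
    sum_add_distrib, sum_ite_eq', sum_filter]
  split_ifs <;> simp only [pow_zero, List.take_zero, List.sum_nil, inv_one, mul_one, one_mul,
    pow_one, neg_mul, zero_add, sub_eq_add_neg, neg_add_rev, ← sum_neg_distrib, apply_ite, neg_neg,
    neg_zero]
  ring

theorem derivedCoeff_apply_of_length_le_length {w : List ℕ}
    (hT : ∀ t ∈ T, t.length ≤ w.length) (x : ℝ) :
    derivedCoeff T A w x = if w ∈ T then A w x - A w (x + 1) else 0 := by
  rw [derivedCoeff_apply_of_length_le (fun t ht => (hT t ht).trans w.length.le_succ), add_eq_left]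
  refine sum_eq_zero fun t ht => absurd (hT t (mem_filter.1 ht).1) ?_
  obtain ⟨hne, rfl⟩ := (mem_filter.1 ht).2
  have := List.length_pos_of_ne_nil hne
  simp only [List.length_tail]
  omega

namespace IsRelation

theorem filter (h : IsRelation T A) (p : List ℕ → Prop) [DecidablePred p]
    (hp : ∀ t ∈ T, ¬p t → ∀ x : ℝ, 1 < x → A t x = 0) : IsRelation (T.filter p) A := by
  refine ⟨fun t ht => h.1 t (mem_filter.1 ht).1, fun x hx => ?_⟩
  rw [← h.2 x hx, ← sum_filter_add_sum_filter_not T p, left_eq_add]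
  exact sum_eq_zero fun t ht => by
    rw [hp t (mem_filter.1 ht).1 (mem_filter.1 ht).2 x hx, zero_mul]

theorem mul_left (h : IsRelation T A) {D : ℝ → ℂ} (hD : D ∈ 𝓡) :
    IsRelation T fun t => D * A t :=
  ⟨fun t ht => ⟨(h.1 t ht).1, mul_mem hD (h.1 t ht).2⟩, fun x hx => by
    simp only [Pi.mul_apply, mul_assoc, ← mul_sum, h.2 x hx, mul_zero]⟩

theorem derived (h : IsRelation T A) : IsRelation (derivedSupport T) (derivedCoeff T A) := by
  refine ⟨fun w hw => ?_, fun x hx => ?_⟩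
  · obtain ⟨t, ht, hwt⟩ := mem_derivedSupport.1 hw
    refine ⟨(h.1 t ht).1.of_suffix hwt, sub_mem ?_ (sum_mem fun t ht => sum_mem fun j _ => ?_)⟩
    · split_ifs with hw
      exacts [(h.1 w hw).2, zero_mem _]
    · split_ifs
      · refine Subalgebra.smul_mem _ (mul_mem (inv_pow_mem (by simp) _)
          (comp_add_mem (h.1 t ht).2 zero_le_one fun z hz => ?_)) _
        simp only [Set.mem_preimage, Set.mem_Ioi, Complex.add_re, Complex.ofReal_re] at hz ⊢
        linarith
      · exact zero_mem _
  · rw [sum_derivedCoeff_mul (fun t ht => (h.1 t ht).1) hx.le, h.2 x hx,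
      h.2 (x + 1) (by linarith), sub_zero]

theorem derivedCoeff_eq_zero {r : ℕ} (hr : RelationsVanish r) (h : IsRelation T A)
    (hT : ∀ t ∈ T, t.length ≤ r + 1)
    (hper : ∀ t ∈ T, t.length = r + 1 → ∀ x : ℝ, 1 < x → A t (x + 1) = A t x) :
    ∀ w ∈ derivedSupport T, w.length ≤ r → ∀ x : ℝ, 1 < x → derivedCoeff T A w x = 0 := by
  have hlow := hr _ _ (h.derived.filter (·.length ≤ r) fun w hw hwr x hx => by
    obtain ⟨t, ht, hwt⟩ := mem_derivedSupport.1 hw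
    have hw' : w.length = r + 1 := by have := hwt.length_le.trans (hT t ht); omega
    rw [derivedCoeff_apply_of_length_le_length fun t ht => hw' ▸ hT t ht]
    split_ifs with hwT
    · rw [hper w hwT hw' x hx, sub_self]
    · rfl) fun w hw => (mem_filter.1 hw).2
  exact fun w hw hwr => hlow w (mem_filter.2 ⟨hw, hwr⟩)

theorem top_eq_zero_of_const {r : ℕ} (hr : RelationsVanish r) (h : IsRelation T A)
    (hT : ∀ t ∈ T, t.length ≤ r + 1)
    (hc : ∀ t ∈ T, t.length = r + 1 → ∃ c : ℂ, ∀ x : ℝ, 1 < x → A t x = c) :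
    ∀ t ∈ T, t.length = r + 1 → ∀ x : ℝ, 1 < x → A t x = 0 := by
  classical
  choose! c hc using hc
  have hlow := h.derivedCoeff_eq_zero hr hT fun t ht hlen x hx => by
    rw [hc t ht hlen x hx, hc t ht hlen (x + 1) (by linarith)]
  intro t₀ ht₀ hlen x hx
  obtain ⟨k₀, w, rfl⟩ := List.exists_cons_of_ne_nil (List.ne_nil_of_length_eq_add_one hlen)
  have hw : w.length = r := by simpa using hlen
  set s := T.filter fun t => t ≠ [] ∧ t.tail = w
  have hcons : ∀ t ∈ s, t = (t.take 1).sum :: w := by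
    intro t ht
    obtain ⟨⟨a, u, rfl⟩, rfl⟩ := And.imp_left List.exists_cons_of_ne_nil (mem_filter.1 ht).2
    simp
  -- At `w`, the derived relation reads `∑ₜ c t * y⁻ᵏ = B (y + 1) - B y` over the `t = k :: w`.
  have hpole := eq_zero_of_sum_mul_inv_pow_eq_shift_sub (k := fun t => (t.take 1).sum) (c := c)
    (B := if w ∈ T then A w else 0)
    (fun t ht t' ht' htt' => (hcons t ht).trans (by
      rw [hcons t' ht']
      exact congr_arg (· :: w) htt'))
    (fun t ht => (h.1 t (mem_filter.1 ht).1).1.1 _ (by rw [hcons t ht]; simp))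
    (by split_ifs with hwT; exacts [(h.1 w hwT).2, zero_mem _]) fun y hy => by
      have hd := hlow w (mem_derivedSupport.2 ⟨_, ht₀, List.suffix_cons k₀ w⟩) hw.le y hy
      rw [derivedCoeff_apply_of_length_le (fun t ht => hw ▸ hT t ht)] at hd
      have hsum : ∑ t ∈ s, c t * ((y : ℂ) ^ (t.take 1).sum)⁻¹ =
          ∑ t ∈ s, ((y : ℂ) ^ (t.take 1).sum)⁻¹ * A t (y + 1) := sum_congr rfl fun t ht => by
        rw [hc t (mem_filter.1 ht).1 (by rw [hcons t ht]; simp [hw]) (y + 1) (by linarith),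
          mul_comm]
      rw [hsum]
      split_ifs at hd ⊢ <;> linear_combination hd
  rw [hc _ ht₀ hlen x hx, hpole _ (mem_filter.2 ⟨ht₀, by simp⟩)]

theorem top_eq_zero_of_polynomial {r : ℕ} (hr : RelationsVanish r) (D : ℕ)
    (h : IsRelation T A) (hT : ∀ t ∈ T, t.length ≤ r + 1)
    (hP : ∀ t ∈ T, t.length = r + 1 →
      ∃ P : ℂ[X], P.natDegree ≤ D ∧ ∀ x : ℝ, 1 < x → A t x = P.eval (x : ℂ)) :
    ∀ t ∈ T, t.length = r + 1 → ∀ x : ℝ, 1 < x → A t x = 0 := by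
  induction D generalizing T A with
  | zero =>
    refine h.top_eq_zero_of_const hr hT fun t ht hlen => ?_
    obtain ⟨P, hP0, hPA⟩ := hP t ht hlen
    exact ⟨P.coeff 0, fun x hx => by rw [hPA x hx, eq_C_of_natDegree_le_zero hP0]; simp⟩
  | succ D ih =>
    have hT' : ∀ w ∈ derivedSupport T, w.length ≤ r + 1 := fun w hw => by
      obtain ⟨t, ht, hwt⟩ := mem_derivedSupport.1 hw
      exact hwt.length_le.trans (hT t ht)
    have hderived := ih h.derived hT' fun w _ hw => by
      rw [← hw] at hT
      by_cases hwT : w ∈ T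
      · obtain ⟨P, hPD, hPA⟩ := hP w hwT hw
        refine ⟨-(taylor 1 P - P), (natDegree_neg _).trans_le (natDegree_taylor_sub_le 1 hPD),
          fun x hx => ?_⟩
        rw [derivedCoeff_apply_of_length_le_length hT, if_pos hwT, hPA x hx,
          hPA (x + 1) (by linarith)]
        simp [taylor_eval]
      · exact ⟨0, by simp, fun x _ => by
          rw [derivedCoeff_apply_of_length_le_length hT, if_neg hwT, eval_zero]⟩
    refine h.top_eq_zero_of_const hr hT fun t ht hlen => ?_
    obtain ⟨P, -, hPA⟩ := hP t ht hlen
    have hconst : P = C (P.eval 2) := eq_C_of_eval_add_one_eq fun y hy => by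
      have := hderived t (mem_derivedSupport.2 ⟨t, ht, List.suffix_refl t⟩) hlen y hy
      rw [derivedCoeff_apply_of_length_le_length (hlen ▸ hT), if_pos ht, hPA y hy,
        hPA (y + 1) (by linarith), sub_eq_zero] at this
      exact this.symm
    exact ⟨P.eval 2, fun x hx => by rw [hPA x hx, hconst]; simp⟩

end IsRelation

end

theorem relationsVanish_zero : RelationsVanish 0 := by
  intro T A h hT t ht x hx
  obtain rfl : t = [] := List.eq_nil_of_length_eq_zero (Nat.le_zero.1 (hT t ht))
  have hT : T = {[]} := eq_singleton_iff_unique_mem.2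
    ⟨ht, fun t ht => List.eq_nil_of_length_eq_zero (Nat.le_zero.1 (hT t ht))⟩
  simpa [hT, hurwitzPolyzeta_nil] using h.2 x hx

theorem relationsVanish_succ {r : ℕ} (hr : RelationsVanish r) : RelationsVanish (r + 1) := by
  classical
  intro T A h hT
  obtain ⟨D, hD, hD0, hDA⟩ := exists_common_denominator T fun t ht => (h.1 t ht).2
  choose! P hP using hDA
  have htop : ∀ t ∈ T, t.length = r + 1 → ∀ x : ℝ, 1 < x → A t x = 0 := fun t ht hlen x hx =>
    (mul_eq_zero.1 ((h.mul_left hD).top_eq_zero_of_polynomial hr (T.sup fun t => (P t).natDegree)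
      hT (fun t ht _ => ⟨P t, le_sup (f := fun t => (P t).natDegree) ht, hP t ht⟩)
      t ht hlen x hx)).resolve_left (hD0 x hx)
  have hlow := hr _ _ (h.filter (·.length ≤ r) fun t ht htr =>
    htop t ht (by have := hT t ht; omega)) fun t ht => (mem_filter.1 ht).2
  intro t ht x hx
  by_cases htr : t.length ≤ r
  · exact hlow t (mem_filter.2 ⟨ht, htr⟩) x hx
  · exact htop t ht (by have := hT t ht; omega) x hx

theorem relationsVanish (r : ℕ) : RelationsVanish r :=
  Nat.rec relationsVanish_zero (fun _ => relationsVanish_succ) r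

theorem linearIndependent_hurwitzPolyzeta_Ioi :
    LinearIndependent ℂ fun t : {t : List ℕ // Admissible t} =>
      fun x : Set.Ioi (1 : ℝ) => hurwitzPolyzeta (t.1.map (↑)) (x : ℂ) := by
  classical
  rw [linearIndependent_iff']
  intro s g hg i hi
  let A : List ℕ → ℝ → ℂ := fun t _ => if ht : Admissible t then g ⟨t, ht⟩ else 0
  have hrel : IsRelation (s.map (Function.Embedding.subtype _)) A := by
    refine ⟨fun t ht => ?_, fun x hx => ?_⟩
    · obtain ⟨t, -, rfl⟩ := mem_map.1 ht
      exact ⟨t.2, Subalgebra.algebraMap_mem _ (A t 0)⟩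
    · have := congr_fun hg ⟨x, hx⟩
      simp only [Finset.sum_apply, Pi.smul_apply, smul_eq_mul, Pi.zero_apply] at this
      rw [sum_map, ← this]
      exact sum_congr rfl fun t _ => by simp [A, t.2]
  simpa [A, i.2] using relationsVanish _ _ _ hrel (fun t ht => le_sup (f := List.length) ht) i.1
    (mem_map_of_mem _ hi) 2 one_lt_two

end HurwitzPolyzeta

end

open HurwitzPolyzeta in
/-- The constant function `1` together with the Hurwitz polyzeta functions form a
linearly independent family over `ℂ` in the space of functions from the half-plane
`{z : ℂ | 0 < Re z}` to `ℂ`. -/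
theorem hurwitzPolyzeta_linearIndependent :
    LinearIndependent ℂ
      (fun i : Option HurwitzIndex =>
        Option.elim i ((fun _ => 1) : {z : ℂ // 0 < z.re} → ℂ)
          (fun l => fun z : {z : ℂ // 0 < z.re} =>
            hurwitzPolyzeta (l.1.map (fun k => (k : ℂ))) z.1)) := by
  let e : Option HurwitzIndex → {t : List ℕ // Admissible t}
    | none => ⟨[], Admissible.nil⟩
    | some l => ⟨l.1, l.admissible⟩
  have he : Function.Injective e := by
    rintro (_ | ⟨l, hl⟩) (_ | ⟨l', hl'⟩) h
    · rfl
    · exact absurd (congr_arg Subtype.val h).symm hl'.1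
    · exact absurd (congr_arg Subtype.val h) hl.1
    · exact congr_arg some (Subtype.ext (congr_arg Subtype.val h : l = l'))
  refine LinearIndependent.of_comp (LinearMap.funLeft ℂ ℂ fun x : Set.Ioi (1 : ℝ) =>
    (⟨x, by simpa using one_pos.trans x.2⟩ : {z : ℂ // 0 < z.re})) ?_
  convert linearIndependent_hurwitzPolyzeta_Ioi.comp e he using 1
  funext i x
  cases i with
  | none => exact (hurwitzPolyzeta_nil _).symm
  | some l =>
    show hurwitzPolyzeta _ _ = hurwitzPolyzeta _ _
    congr 1
    -- In the statement `fun k => (k : ℂ)` is the identity of `ℂ`, mapped over `l.1 : List ℂ`.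
    exact (List.map_id _).trans (List.flatMap_pure_eq_map Nat.cast l.1)
end
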